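/- arXiv:1810.10304 — 12 statements merged into one kernel-verified Lean document; each statement's English description precedes it below -/
import Mathlib

section
/- For every action j with 3 ≤ j ≤ k and every agent t ≥ j, if q_{t−1}^{j−1} = A_{t−1}^{j−1}, then q_t^j ≤ p_{j−1}^{-1} · A_{t−1}^{j−1} = p_{j−1}^{-1} · q_{t−1}^{j−1}. -/
theorem stmt_0
    (k : ℕ) (hk : 3 ≤ k)
    (p1m p10 : ℝ) (hp1m : 0 < p1m) (hp10 : 0 < p10) (hp1sum : p1m + p10 ≤ 1)
    (p : ℕ → ℝ)
    (hp2 : p 2 < 1/2) (hpk : 0 < p k)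
    (hpdec : ∀ j : ℕ, 2 ≤ j → j < k → p (j+1) < p j)
    (A B q : ℕ → ℕ → ℝ)
    (hA2 : ∀ t : ℕ, A 2 t =
      (2 * p1m * p 2 + p 2 * ∑ m ∈ Finset.Icc 2 (t-1), q 2 m) / (1 - 2 * p 2))
    (hB2 : ∀ t : ℕ, B 2 t = p10 - ∑ m ∈ Finset.Icc 2 (t-1), q 2 m)
    (hAj : ∀ j t : ℕ, 3 ≤ j → j ≤ k →
      A j t = (2 * p j * (p1m * ∏ i ∈ Finset.Icc 2 (j-1), (1 - p i))
        + p j * ∑ τ ∈ Finset.Icc j (t-1), q j τ) / (1 - 2 * p j))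
    (hBj : ∀ j t : ℕ, 3 ≤ j → j ≤ k →
      B j t = (1 - p (j-1)) * ∑ τ ∈ Finset.Icc (j-1) (t-1), q (j-1) τ
        - ∑ τ ∈ Finset.Icc j (t-1), q j τ)
    (hq21 : q 2 1 = 0)
    (hq2 : ∀ t : ℕ, 2 ≤ t → q 2 t = min (A 2 t) (B 2 t))
    (hqlt : ∀ j t : ℕ, 3 ≤ j → j ≤ k → t < j → q j t = 0)
    (hqge : ∀ j t : ℕ, 3 ≤ j → j ≤ k → j ≤ t → q j t = min (A j t) (B j t))
    (n : ℕ → ℕ) (hn1 : n 1 = 1)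
    (hnpos : ∀ j : ℕ, 2 ≤ j → j ≤ k → 0 < q j (n j))
    (hnmax : ∀ j : ℕ, 2 ≤ j → j ≤ k → ∀ t : ℕ, 0 < q j t → t ≤ n j)
    (ρ : ℕ → ℝ)
    (hρ : ∀ j : ℕ, 2 ≤ j → j ≤ k → ρ j = p10 * ∏ i ∈ Finset.Icc 2 (j-1), (1 - p i))
    (f : ℝ → ℕ → ℕ)
    (hf : ∀ y : ℝ, 0 < y → y ≤ 1 → ∀ j : ℕ, 2 ≤ j → j ≤ k →
      (∑ τ ∈ Finset.Icc 1 (f y j - 1), q j τ < y * ρ j) ∧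
      (∀ t : ℕ, (∑ τ ∈ Finset.Icc 1 (t-1), q j τ < y * ρ j) → t ≤ f y j)) :
    ∀ j t : ℕ, 3 ≤ j → j ≤ k → j ≤ t →
      q (j-1) (t-1) = A (j-1) (t-1) →
      q j t ≤ (1 - p (j-1)) * A (j-1) (t-1) ∧
      (1 - p (j-1)) * A (j-1) (t-1) = (1 - p (j-1)) * q (j-1) (t-1) := by
  -- monotonicity and positivity facts about p
  have hmono : ∀ i j : ℕ, 2 ≤ i → i ≤ j → j ≤ k → p j ≤ p i := by
    intro i j h2 hij
    induction j, hij using Nat.le_induction with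
    | base => intro _; exact le_rfl
    | succ j hij ih =>
      intro hjk
      exact le_trans (hpdec j (by omega) (by omega)).le (ih (by omega))
  have ppos : ∀ j : ℕ, 2 ≤ j → j ≤ k → 0 < p j := fun j h2 hj =>
    lt_of_lt_of_le hpk (hmono j k h2 hj le_rfl)
  have plt : ∀ j : ℕ, 2 ≤ j → j ≤ k → p j < 1/2 := fun j h2 hj =>
    lt_of_le_of_lt (hmono 2 j le_rfl h2 hj) hp2
  have pden : ∀ j : ℕ, 2 ≤ j → j ≤ k → 0 < 1 - 2 * p j := by
    intro j h2 hj; have := plt j h2 hj; linarith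
  have pone : ∀ j : ℕ, 2 ≤ j → j ≤ k → 0 < 1 - p j := by
    intro j h2 hj; have := plt j h2 hj; have := ppos j h2 hj; linarith
  have hProd : ∀ m : ℕ, m + 1 ≤ k → 0 < p1m * ∏ i ∈ Finset.Icc 2 m, (1 - p i) := by
    intro m hm
    refine mul_pos hp1m (Finset.prod_pos ?_)
    intro i hi
    simp only [Finset.mem_Icc] at hi
    exact pone i hi.1 (by omega)
  have hS2 : ∀ m : ℕ, ∑ τ ∈ Finset.Icc 2 m, q 2 τ ≤ p10 := by
    intro m
    rcases Nat.lt_or_ge m 2 with h | h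
    · interval_cases m <;> simp [hp10.le]
    · obtain ⟨n', rfl⟩ : ∃ n', m = n' + 1 := ⟨m - 1, by omega⟩
      rw [Finset.sum_Icc_succ_top (by omega)]
      have hb : q 2 (n' + 1) ≤ B 2 (n' + 1) := by
        rw [hq2 (n' + 1) (by omega)]; exact min_le_right _ _
      rw [hB2] at hb
      simp only [Nat.add_sub_cancel] at hb
      linarith
  have hCj : ∀ j : ℕ, 3 ≤ j → j ≤ k → ∀ m : ℕ, j ≤ m + 1 →
      ∑ τ ∈ Finset.Icc j (m+1), q j τ
        ≤ (1 - p (j-1)) * ∑ τ ∈ Finset.Icc (j-1) m, q (j-1) τ := by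
    intro j h3 hjk m hm
    rw [Finset.sum_Icc_succ_top hm]
    have hb : q j (m+1) ≤ B j (m+1) := by
      rw [hqge j (m+1) h3 hjk hm]; exact min_le_right _ _
    rw [hBj j (m+1) h3 hjk] at hb
    simp only [Nat.add_sub_cancel] at hb
    linarith
  have qnn : ∀ t : ℕ, ∀ j : ℕ, 2 ≤ j → j ≤ k → 2 ≤ t → 0 ≤ q j t := by
    intro t
    induction t using Nat.strong_induction_on with
    | _ t IH =>
      intro j h2 hjk ht
      rcases Nat.lt_or_ge t j with hlt | hge
      · rw [hqlt j t (by omega) hjk hlt]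
      · have hsumq : 0 ≤ ∑ τ ∈ Finset.Icc j (t-1), q j τ := by
          refine Finset.sum_nonneg ?_
          intro τ hτ
          simp only [Finset.mem_Icc] at hτ
          exact IH τ (by omega) j h2 hjk (by omega)
        by_cases hj2 : j = 2
        · subst hj2
          rw [hq2 t ht]
          have hA : 0 ≤ A 2 t := by
            rw [hA2]
            have hp := ppos 2 le_rfl (by omega)
            have hd := pden 2 le_rfl (by omega)
            apply div_nonneg _ hd.le
            nlinarith
          have hB : 0 ≤ B 2 t := by rw [hB2]; linarith [hS2 (t-1)]
          exact le_min hA hB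
        · have h3 : 3 ≤ j := by omega
          rw [hqge j t h3 hjk hge]
          have hp := ppos j (by omega) hjk
          have hd := pden j (by omega) hjk
          have hA : 0 ≤ A j t := by
            rw [hAj j t h3 hjk]
            have hP := hProd (j-1) (by omega)
            apply div_nonneg _ hd.le
            nlinarith
          have hB : 0 ≤ B j t := by
            rw [hBj j t h3 hjk]
            have h1p := pone (j-1) (by omega) (by omega)
            rcases Nat.eq_or_lt_of_le hge with heq | hlt2
            · have e1 : Finset.Icc j (t-1) = ∅ := Finset.Icc_eq_empty (by omega)
              have e2 : Finset.Icc (j-1) (t-1) = {j-1} := by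
                have : t - 1 = j - 1 := by omega
                rw [this, Finset.Icc_self]
              rw [e1, e2, Finset.sum_singleton, Finset.sum_empty]
              have hqn : 0 ≤ q (j-1) (j-1) := IH (j-1) (by omega) (j-1) (by omega) (by omega) (by omega)
              nlinarith
            · have hC := hCj j h3 hjk (t-2) (by omega)
              have e : t - 2 + 1 = t - 1 := by omega
              rw [e] at hC
              have hsplit : ∑ τ ∈ Finset.Icc (j-1) (t-1), q (j-1) τ
                  = ∑ τ ∈ Finset.Icc (j-1) (t-2), q (j-1) τ + q (j-1) (t-1) := by
                have e2 : t - 1 = (t-2) + 1 := by omega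
                rw [e2, Finset.sum_Icc_succ_top (by omega)]
              have hqn : 0 ≤ q (j-1) (t-1) := IH (t-1) (by omega) (j-1) (by omega) (by omega) (by omega)
              rw [hsplit]
              nlinarith
          exact le_min hA hB
  intro j t h3 hjk hjt hqA
  refine ⟨?_, by rw [hqA]⟩
  have hp := ppos j (by omega) hjk
  have hd := pden j (by omega) hjk
  have hp1 := ppos (j-1) (by omega) (by omega)
  have hd1 := pden (j-1) (by omega) (by omega)
  have h1p := pone (j-1) (by omega) (by omega)
  rcases Nat.eq_or_lt_of_le hjt with heq | hlt
  · -- t = j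
    have hb : q j t ≤ B j t := by
      rw [hqge j t h3 hjk hjt]; exact min_le_right _ _
    rw [hBj j t h3 hjk] at hb
    have e1 : Finset.Icc j (t-1) = ∅ := Finset.Icc_eq_empty (by omega)
    have e2 : Finset.Icc (j-1) (t-1) = {j-1} := by
      have : t - 1 = j - 1 := by omega
      rw [this, Finset.Icc_self]
    rw [e1, e2, Finset.sum_singleton, Finset.sum_empty] at hb
    have e3 : q (j-1) (j-1) = q (j-1) (t-1) := by
      have : t - 1 = j - 1 := by omega
      rw [this]
    rw [e3, hqA] at hb
    linarith
  · -- t > j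
    have ha : q j t ≤ A j t := by
      rw [hqge j t h3 hjk hjt]; exact min_le_left _ _
    rw [hAj j t h3 hjk] at ha
    have hps : ∏ i ∈ Finset.Icc 2 (j-1), (1 - p i)
        = (∏ i ∈ Finset.Icc 2 (j-2), (1 - p i)) * (1 - p (j-1)) := by
      have e : j - 1 = (j-2) + 1 := by omega
      rw [e, Finset.prod_Icc_succ_top (by omega)]
    rw [hps, ← mul_assoc p1m] at ha
    have hAprev : A (j-1) (t-1)
        = (2 * p (j-1) * (p1m * ∏ i ∈ Finset.Icc 2 (j-2), (1 - p i))
          + p (j-1) * ∑ τ ∈ Finset.Icc (j-1) (t-2), q (j-1) τ) / (1 - 2 * p (j-1)) := by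
      by_cases hj3 : j = 3
      · subst hj3
        rw [hA2 (t-1)]
        have e1 : Finset.Icc 2 (3-2) = (∅ : Finset ℕ) := by decide
        have e2 : t - 1 - 1 = t - 2 := by omega
        rw [e2]
        norm_num [e1]
        ring
      · have h4 : 3 ≤ j - 1 := by omega
        rw [hAj (j-1) (t-1) h4 (by omega)]
        have e1 : j - 1 - 1 = j - 2 := by omega
        have e2 : t - 1 - 1 = t - 2 := by omega
        rw [e1, e2]
    have hC := hCj j h3 hjk (t-2) (by omega)
    have e : t - 2 + 1 = t - 1 := by omega
    rw [e] at hC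
    have hT : 0 ≤ ∑ τ ∈ Finset.Icc (j-1) (t-2), q (j-1) τ := by
      refine Finset.sum_nonneg ?_
      intro τ hτ
      simp only [Finset.mem_Icc] at hτ
      exact qnn τ (j-1) (by omega) (by omega) (by omega)
    have hP' : 0 < p1m * ∏ i ∈ Finset.Icc 2 (j-2), (1 - p i) := hProd (j-2) (by omega)
    have hplt : p j < p (j-1) := by
      have := hpdec (j-1) (by omega) (by omega)
      have e4 : j - 1 + 1 = j := by omega
      rwa [e4] at this
    rw [hAprev]
    set Pr := p1m * ∏ i ∈ Finset.Icc 2 (j-2), (1 - p i) with hPr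
    set S := ∑ τ ∈ Finset.Icc j (t-1), q j τ with hSdef
    set T := ∑ τ ∈ Finset.Icc (j-1) (t-2), q (j-1) τ with hTdef
    have key : (2 * p j * (Pr * (1 - p (j-1))) + p j * S) / (1 - 2 * p j)
        ≤ (1 - p (j-1)) * ((2 * p (j-1) * Pr + p (j-1) * T) / (1 - 2 * p (j-1))) := by
      rw [mul_div_assoc' (1 - p (j-1)), div_le_div_iff₀ hd hd1]
      have hX : 0 ≤ (1 - p (j-1)) * (2 * Pr + T) * (p (j-1) * (1 - 2 * p j) - p j * (1 - 2 * p (j-1))) := by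
        have h1 : 0 ≤ 2 * Pr + T := by linarith
        have h2 : 0 ≤ p (j-1) * (1 - 2 * p j) - p j * (1 - 2 * p (j-1)) := by nlinarith
        positivity
      have hY : 0 ≤ p j * (1 - 2 * p (j-1)) * ((1 - p (j-1)) * T - S) := by
        have h1 : 0 ≤ (1 - p (j-1)) * T - S := by linarith
        positivity
      nlinarith [hX, hY]
    calc q j t ≤ _ := ha
      _ ≤ _ := key
end

section
/- For every action j with 2 ≤ j ≤ k, the exploration rate of agent j for action j is strictly positive, i.e., q_j^j > 0. -/
theorem stmt_1
    (k : ℕ) (hk : 3 ≤ k)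
    (p1m p10 : ℝ) (hp1m : 0 < p1m) (hp10 : 0 < p10) (hp1sum : p1m + p10 ≤ 1)
    (p : ℕ → ℝ)
    (hp2 : p 2 < 1/2) (hpk : 0 < p k)
    (hpdec : ∀ j : ℕ, 2 ≤ j → j < k → p (j+1) < p j)
    (A B q : ℕ → ℕ → ℝ)
    (hA2 : ∀ t : ℕ, A 2 t =
      (2 * p1m * p 2 + p 2 * ∑ m ∈ Finset.Icc 2 (t-1), q 2 m) / (1 - 2 * p 2))
    (hB2 : ∀ t : ℕ, B 2 t = p10 - ∑ m ∈ Finset.Icc 2 (t-1), q 2 m)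
    (hAj : ∀ j t : ℕ, 3 ≤ j → j ≤ k →
      A j t = (2 * p j * (p1m * ∏ i ∈ Finset.Icc 2 (j-1), (1 - p i))
        + p j * ∑ τ ∈ Finset.Icc j (t-1), q j τ) / (1 - 2 * p j))
    (hBj : ∀ j t : ℕ, 3 ≤ j → j ≤ k →
      B j t = (1 - p (j-1)) * ∑ τ ∈ Finset.Icc (j-1) (t-1), q (j-1) τ
        - ∑ τ ∈ Finset.Icc j (t-1), q j τ)
    (hq21 : q 2 1 = 0)
    (hq2 : ∀ t : ℕ, 2 ≤ t → q 2 t = min (A 2 t) (B 2 t))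
    (hqlt : ∀ j t : ℕ, 3 ≤ j → j ≤ k → t < j → q j t = 0)
    (hqge : ∀ j t : ℕ, 3 ≤ j → j ≤ k → j ≤ t → q j t = min (A j t) (B j t))
    (n : ℕ → ℕ) (hn1 : n 1 = 1)
    (hnpos : ∀ j : ℕ, 2 ≤ j → j ≤ k → 0 < q j (n j))
    (hnmax : ∀ j : ℕ, 2 ≤ j → j ≤ k → ∀ t : ℕ, 0 < q j t → t ≤ n j)
    (ρ : ℕ → ℝ)
    (hρ : ∀ j : ℕ, 2 ≤ j → j ≤ k → ρ j = p10 * ∏ i ∈ Finset.Icc 2 (j-1), (1 - p i))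
    (f : ℝ → ℕ → ℕ)
    (hf : ∀ y : ℝ, 0 < y → y ≤ 1 → ∀ j : ℕ, 2 ≤ j → j ≤ k →
      (∑ τ ∈ Finset.Icc 1 (f y j - 1), q j τ < y * ρ j) ∧
      (∀ t : ℕ, (∑ τ ∈ Finset.Icc 1 (t-1), q j τ < y * ρ j) → t ≤ f y j)) :
    ∀ j : ℕ, 2 ≤ j → j ≤ k → 0 < q j j := by
  have hppos : ∀ j : ℕ, 2 ≤ j → j ≤ k → 0 < p j := by
    have key : ∀ d : ℕ, ∀ j : ℕ, 2 ≤ j → j + d = k → 0 < p j := by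
      intro d
      induction d with
      | zero =>
        intro j h2 hjk
        simp at hjk; subst hjk; exact hpk
      | succ d ih =>
        intro j h2 hjk
        have h1 : 0 < p (j+1) := ih (j+1) (by omega) (by omega)
        have := hpdec j h2 (by omega)
        linarith
    intro j h2 hjk
    exact key (k - j) j h2 (by omega)
  have hphalf : ∀ j : ℕ, 2 ≤ j → j ≤ k → p j < 1/2 := by
    intro j h2
    induction j, h2 using Nat.le_induction with
    | base => intro _; exact hp2
    | succ j hj ih =>
      intro hjk
      have := hpdec j hj (by omega)
      have := ih (by omega)
      linarith
  intro j hj2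
  induction j, hj2 using Nat.le_induction with
  | base =>
    intro hk2
    have hA : 0 < A 2 2 := by
      have hs : Finset.Icc 2 (2-1) = (∅ : Finset ℕ) := by decide
      rw [hA2 2, hs, Finset.sum_empty]
      have h2 : 0 < p 2 := hppos 2 le_rfl hk2
      apply div_pos <;> nlinarith
    have hB : 0 < B 2 2 := by
      have hs : Finset.Icc 2 (2-1) = (∅ : Finset ℕ) := by decide
      rw [hB2 2, hs, Finset.sum_empty]; linarith
    rw [hq2 2 le_rfl]; exact lt_min hA hB
  | succ j hj ih =>
    intro hjk
    have hjk' : j ≤ k := by omega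
    have hqj : 0 < q j j := ih hjk'
    have h3 : 3 ≤ j + 1 := by omega
    have hpj1 : 0 < p (j+1) := hppos _ (by omega) hjk
    have hpj1h : p (j+1) < 1/2 := hphalf _ (by omega) hjk
    have hempty : Finset.Icc (j+1) ((j+1)-1) = (∅ : Finset ℕ) := by
      apply Finset.Icc_eq_empty; omega
    have hA : 0 < A (j+1) (j+1) := by
      rw [hAj (j+1) (j+1) h3 hjk, hempty, Finset.sum_empty]
      have hprod : 0 < p1m * ∏ i ∈ Finset.Icc 2 ((j+1)-1), (1 - p i) := by
        apply mul_pos hp1m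
        apply Finset.prod_pos
        intro i hi
        simp [Finset.mem_Icc] at hi
        have := hphalf i hi.1 (by omega)
        linarith
      apply div_pos <;> nlinarith
    have hB : 0 < B (j+1) (j+1) := by
      rw [hBj (j+1) (j+1) h3 hjk, hempty, Finset.sum_empty]
      have hd : (j+1) - 1 = j := by omega
      rw [hd, Finset.Icc_self, Finset.sum_singleton]
      have hpjh : p j < 1/2 := hphalf j hj hjk'
      nlinarith
    rw [hqge (j+1) (j+1) h3 hjk le_rfl]
    exact lt_min hA hB
end

section
/- For every action j with 2 ≤ j ≤ k and every agent t with n_{j−1} < t ≤ n_j (where n_1 := 1), it holds that q_t^j > 0. -/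
theorem stmt_4
    (k : ℕ) (hk : 3 ≤ k)
    (p1m p10 : ℝ) (hp1m : 0 < p1m) (hp10 : 0 < p10) (hp1sum : p1m + p10 ≤ 1)
    (p : ℕ → ℝ)
    (hp2 : p 2 < 1/2) (hpk : 0 < p k)
    (hpdec : ∀ j : ℕ, 2 ≤ j → j < k → p (j+1) < p j)
    (A B q : ℕ → ℕ → ℝ)
    (hA2 : ∀ t : ℕ, A 2 t =
      (2 * p1m * p 2 + p 2 * ∑ m ∈ Finset.Icc 2 (t-1), q 2 m) / (1 - 2 * p 2))
    (hB2 : ∀ t : ℕ, B 2 t = p10 - ∑ m ∈ Finset.Icc 2 (t-1), q 2 m)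
    (hAj : ∀ j t : ℕ, 3 ≤ j → j ≤ k →
      A j t = (2 * p j * (p1m * ∏ i ∈ Finset.Icc 2 (j-1), (1 - p i))
        + p j * ∑ τ ∈ Finset.Icc j (t-1), q j τ) / (1 - 2 * p j))
    (hBj : ∀ j t : ℕ, 3 ≤ j → j ≤ k →
      B j t = (1 - p (j-1)) * ∑ τ ∈ Finset.Icc (j-1) (t-1), q (j-1) τ
        - ∑ τ ∈ Finset.Icc j (t-1), q j τ)
    (hq21 : q 2 1 = 0)
    (hq2 : ∀ t : ℕ, 2 ≤ t → q 2 t = min (A 2 t) (B 2 t))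
    (hqlt : ∀ j t : ℕ, 3 ≤ j → j ≤ k → t < j → q j t = 0)
    (hqge : ∀ j t : ℕ, 3 ≤ j → j ≤ k → j ≤ t → q j t = min (A j t) (B j t))
    (n : ℕ → ℕ) (hn1 : n 1 = 1)
    (hnpos : ∀ j : ℕ, 2 ≤ j → j ≤ k → 0 < q j (n j))
    (hnmax : ∀ j : ℕ, 2 ≤ j → j ≤ k → ∀ t : ℕ, 0 < q j t → t ≤ n j)
    (ρ : ℕ → ℝ)
    (hρ : ∀ j : ℕ, 2 ≤ j → j ≤ k → ρ j = p10 * ∏ i ∈ Finset.Icc 2 (j-1), (1 - p i))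
    (f : ℝ → ℕ → ℕ)
    (hf : ∀ y : ℝ, 0 < y → y ≤ 1 → ∀ j : ℕ, 2 ≤ j → j ≤ k →
      (∑ τ ∈ Finset.Icc 1 (f y j - 1), q j τ < y * ρ j) ∧
      (∀ t : ℕ, (∑ τ ∈ Finset.Icc 1 (t-1), q j τ < y * ρ j) → t ≤ f y j)) :
    ∀ j t : ℕ, 2 ≤ j → j ≤ k → n (j-1) < t → t ≤ n j → 0 < q j t := by
  -- monotonicity of p
  have hmono : ∀ a b : ℕ, 2 ≤ a → a ≤ b → b ≤ k → p b ≤ p a := by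
    intro a b ha hab hbk
    induction b with
    | zero => omega
    | succ m ih =>
      rcases Nat.lt_or_ge a (m+1) with h | h
      · have hm2 : 2 ≤ m := by omega
        have := hpdec m hm2 (by omega)
        exact le_trans this.le (ih (by omega) (by omega))
      · have : a = m + 1 := by omega
        subst this; exact le_rfl
  have hppos : ∀ j, 2 ≤ j → j ≤ k → 0 < p j := fun j h2 hk' =>
    lt_of_lt_of_le hpk (hmono j k h2 hk' le_rfl)
  have hplt : ∀ j, 2 ≤ j → j ≤ k → p j < 1/2 := fun j h2 hk' =>
    lt_of_le_of_lt (hmono 2 j le_rfl h2 hk') hp2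
  -- n 2 ≥ 2
  have hn2 : 2 ≤ n 2 := by
    have hp2pos : 0 < p 2 := hppos 2 le_rfl (by omega)
    have hq22 : 0 < q 2 2 := by
      rw [hq2 2 le_rfl, hA2, hB2]
      have he : Finset.Icc 2 (2-1) = (∅ : Finset ℕ) := Finset.Icc_eq_empty (by omega)
      rw [he]
      simp only [Finset.sum_empty]
      apply lt_min
      · apply div_pos (by nlinarith) (by linarith)
      · linarith
    exact hnmax 2 le_rfl (by omega) 2 hq22
  have hnge : ∀ i, 3 ≤ i → i ≤ k → i ≤ n i := by
    intro i h3 hik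
    by_contra h
    push_neg at h
    have hpos := hnpos i (by omega) hik
    rw [hqlt i (n i) h3 hik h] at hpos
    linarith
  -- key one-step lemma
  have step : ∀ j s : ℕ, 2 ≤ j → j ≤ k → j ≤ s → n (j-1) < s → q j s ≤ 0 →
      q j (s+1) ≤ 0 := by
    intro j s h2 hjk hjs hns hqs
    rcases Nat.lt_or_ge j 3 with h3 | h3
    · -- j = 2
      have hj2 : j = 2 := by omega
      subst hj2
      obtain ⟨m, rfl⟩ : ∃ m, s = m + 2 := ⟨s - 2, by omega⟩
      have hq2s := hq2 (m+2) (by omega)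
      have hq2s1 := hq2 (m+3) (by omega)
      have hp2pos : 0 < p 2 := hppos 2 le_rfl (by omega)
      have hd : 0 < 1 - 2 * p 2 := by
        have := hplt 2 le_rfl (by omega); linarith
      have hsum : ∑ x ∈ Finset.Icc 2 (m+3-1), q 2 x
          = (∑ x ∈ Finset.Icc 2 (m+2-1), q 2 x) + q 2 (m+2) := by
        have h1 : m+3-1 = (m+1) + 1 := by omega
        have h2' : m+2-1 = m+1 := by omega
        rw [h1, h2', Finset.sum_Icc_succ_top (by omega : 2 ≤ m+1+1)]
      rcases le_total (A 2 (m+2)) (B 2 (m+2)) with hAB | hAB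
      · have hA0 : A 2 (m+2) ≤ 0 := by
          rw [hq2s, min_eq_left hAB] at hqs; exact hqs
        have hnum : 2 * p1m * p 2 + p 2 * ∑ x ∈ Finset.Icc 2 (m+2-1), q 2 x ≤ 0 := by
          rw [hA2] at hA0
          by_contra hc
          push_neg at hc
          have := div_pos hc hd
          linarith
        rw [hq2s1]
        refine le_trans (min_le_left _ _) ?_
        rw [hA2, hsum]
        apply div_nonpos_of_nonpos_of_nonneg _ hd.le
        nlinarith
      · have hB0 : q 2 (m+2) = B 2 (m+2) := by
          rw [hq2s, min_eq_right hAB]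
        rw [hq2s1]
        refine le_trans (min_le_right _ _) ?_
        rw [hB2, hsum]
        rw [hB0, hB2] at *
        linarith
    · -- j ≥ 3
      obtain ⟨u, rfl⟩ : ∃ u, s = u + 1 := ⟨s - 1, by omega⟩
      have hju : j ≤ u + 1 := hjs
      have hqj := hqge j (u+1) h3 hjk hju
      have hqj1 := hqge j (u+2) h3 hjk (by omega)
      have hppj : 0 < p j := hppos j h2 hjk
      have hd : 0 < 1 - 2 * p j := by
        have := hplt j h2 hjk; linarith
      have hc' : 0 < 1 - p (j-1) := by
        have := hplt (j-1) (by omega) (by omega); linarith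
      have hqm : q (j-1) (u+1) ≤ 0 := by
        by_contra hc
        push_neg at hc
        have := hnmax (j-1) (by omega) (by omega) (u+1) hc
        omega
      have hsumj : ∑ x ∈ Finset.Icc j (u+2-1), q j x
          = (∑ x ∈ Finset.Icc j (u+1-1), q j x) + q j (u+1) := by
        have h1 : u+2-1 = u + 1 := by omega
        have h2' : u+1-1 = u := by omega
        rw [h1, h2', Finset.sum_Icc_succ_top (by omega : j ≤ u+1)]
      have hsumj1 : ∑ x ∈ Finset.Icc (j-1) (u+2-1), q (j-1) x
          = (∑ x ∈ Finset.Icc (j-1) (u+1-1), q (j-1) x) + q (j-1) (u+1) := by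
        have h1 : u+2-1 = u + 1 := by omega
        have h2' : u+1-1 = u := by omega
        rw [h1, h2', Finset.sum_Icc_succ_top (by omega : j-1 ≤ u+1)]
      rcases le_total (A j (u+1)) (B j (u+1)) with hAB | hAB
      · have hA0 : A j (u+1) ≤ 0 := by
          rw [hqj, min_eq_left hAB] at hqs; exact hqs
        have hnum : 2 * p j * (p1m * ∏ i ∈ Finset.Icc 2 (j-1), (1 - p i))
            + p j * ∑ x ∈ Finset.Icc j (u+1-1), q j x ≤ 0 := by
          rw [hAj j (u+1) h3 hjk] at hA0
          by_contra hc
          push_neg at hc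
          have := div_pos hc hd
          linarith
        rw [hqj1]
        refine le_trans (min_le_left _ _) ?_
        rw [hAj j (u+2) h3 hjk, hsumj]
        apply div_nonpos_of_nonpos_of_nonneg _ hd.le
        nlinarith
      · have hB0 : q j (u+1) = B j (u+1) := by
          rw [hqj, min_eq_right hAB]
        rw [hqj1]
        refine le_trans (min_le_right _ _) ?_
        rw [hBj j (u+2) h3 hjk, hsumj, hsumj1]
        rw [hB0, hBj j (u+1) h3 hjk] at *
        nlinarith
  -- main argument
  intro j t h2 hk' hnt htn
  by_contra hneg
  push_neg at hneg
  have htj : j ≤ t := by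
    rcases Nat.lt_or_ge j 3 with h3 | h3
    · have hj2 : j = 2 := by omega
      subst hj2
      rw [show (2:ℕ)-1 = 1 from rfl, hn1] at hnt
      omega
    · have hle : j - 1 ≤ n (j-1) := by
        rcases Nat.lt_or_ge j 4 with h4 | h4
        · have : j = 3 := by omega
          subst this
          exact hn2
        · exact hnge (j-1) (by omega) (by omega)
      omega
  have hall : ∀ s, t ≤ s → q j s ≤ 0 := by
    intro s hs
    induction s, hs using Nat.le_induction with
    | base => exact hneg
    | succ s hs ih =>
      exact step j s h2 hk' (le_trans htj hs) (lt_of_lt_of_le hnt hs) ih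
  have h0 := hall (n j) htn
  have := hnpos j h2 hk'
  linarith
end

section
/- For every action j with 2 ≤ j ≤ k and every agent t with n_{j−1} < t ≤ n_j (where n_1 := 1), if q_t^j = B_t^j > 0, then for every i ≥ 1 it holds that q_{t+i}^j = 0 and B_{t+i}^j = 0; in particular t = n_j. -/
theorem stmt_5
    (k : ℕ) (hk : 3 ≤ k)
    (p1m p10 : ℝ) (hp1m : 0 < p1m) (hp10 : 0 < p10) (hp1sum : p1m + p10 ≤ 1)
    (p : ℕ → ℝ)
    (hp2 : p 2 < 1/2) (hpk : 0 < p k)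
    (hpdec : ∀ j : ℕ, 2 ≤ j → j < k → p (j+1) < p j)
    (A B q : ℕ → ℕ → ℝ)
    (hA2 : ∀ t : ℕ, A 2 t =
      (2 * p1m * p 2 + p 2 * ∑ m ∈ Finset.Icc 2 (t-1), q 2 m) / (1 - 2 * p 2))
    (hB2 : ∀ t : ℕ, B 2 t = p10 - ∑ m ∈ Finset.Icc 2 (t-1), q 2 m)
    (hAj : ∀ j t : ℕ, 3 ≤ j → j ≤ k →
      A j t = (2 * p j * (p1m * ∏ i ∈ Finset.Icc 2 (j-1), (1 - p i))
        + p j * ∑ τ ∈ Finset.Icc j (t-1), q j τ) / (1 - 2 * p j))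
    (hBj : ∀ j t : ℕ, 3 ≤ j → j ≤ k →
      B j t = (1 - p (j-1)) * ∑ τ ∈ Finset.Icc (j-1) (t-1), q (j-1) τ
        - ∑ τ ∈ Finset.Icc j (t-1), q j τ)
    (hq21 : q 2 1 = 0)
    (hq2 : ∀ t : ℕ, 2 ≤ t → q 2 t = min (A 2 t) (B 2 t))
    (hqlt : ∀ j t : ℕ, 3 ≤ j → j ≤ k → t < j → q j t = 0)
    (hqge : ∀ j t : ℕ, 3 ≤ j → j ≤ k → j ≤ t → q j t = min (A j t) (B j t))
    (n : ℕ → ℕ) (hn1 : n 1 = 1)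
    (hnpos : ∀ j : ℕ, 2 ≤ j → j ≤ k → 0 < q j (n j))
    (hnmax : ∀ j : ℕ, 2 ≤ j → j ≤ k → ∀ t : ℕ, 0 < q j t → t ≤ n j)
    (ρ : ℕ → ℝ)
    (hρ : ∀ j : ℕ, 2 ≤ j → j ≤ k → ρ j = p10 * ∏ i ∈ Finset.Icc 2 (j-1), (1 - p i))
    (f : ℝ → ℕ → ℕ)
    (hf : ∀ y : ℝ, 0 < y → y ≤ 1 → ∀ j : ℕ, 2 ≤ j → j ≤ k →
      (∑ τ ∈ Finset.Icc 1 (f y j - 1), q j τ < y * ρ j) ∧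
      (∀ t : ℕ, (∑ τ ∈ Finset.Icc 1 (t-1), q j τ < y * ρ j) → t ≤ f y j)) :
    ∀ j t : ℕ, 2 ≤ j → j ≤ k → n (j-1) < t → t ≤ n j →
      q j t = B j t → 0 < B j t →
      (∀ i : ℕ, 1 ≤ i → q j (t+i) = 0 ∧ B j (t+i) = 0) ∧ t = n j := by
  -- sum splitting helper
  have hsum : ∀ (g : ℕ → ℝ) (a s : ℕ), 1 ≤ a → a ≤ s →
      (∑ τ ∈ Finset.Icc a s, g τ) = (∑ τ ∈ Finset.Icc a (s-1), g τ) + g s := by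
    intro g a s ha hs
    obtain ⟨s', rfl⟩ : ∃ s', s = s' + 1 := ⟨s - 1, by omega⟩
    rw [Finset.sum_Icc_succ_top (by omega)]
    simp
  -- monotonicity of p
  have hmono : ∀ b, b ≤ k → ∀ a, 2 ≤ a → a ≤ b → p b ≤ p a := by
    intro b
    induction b with
    | zero => intro _ a ha hab; omega
    | succ b ih =>
      intro hbk a ha hab
      rcases eq_or_lt_of_le hab with h | h
      · rw [h]
      · have hb2 : 2 ≤ b := by omega
        have h1 := hpdec b hb2 (by omega)
        have h2 := ih (by omega) a ha (by omega)
        linarith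
  have hppos : ∀ m, 2 ≤ m → m ≤ k → 0 < p m := fun m h1 h2 =>
    lt_of_lt_of_le hpk (hmono k le_rfl m h1 h2)
  have phalf : ∀ m, 2 ≤ m → m ≤ k → p m < 1/2 := fun m h1 h2 =>
    lt_of_le_of_lt (hmono m h2 2 le_rfl h1) hp2
  have hprodpos : ∀ m, 2 ≤ m → m ≤ k →
      0 < p1m * ∏ i ∈ Finset.Icc 2 (m-1), (1 - p i) := by
    intro m hm2 hmk
    apply mul_pos hp1m
    apply Finset.prod_pos
    intro i hi
    simp only [Finset.mem_Icc] at hi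
    have : p i < 1/2 := phalf i (by omega) (by omega)
    linarith
  -- unified A formula
  have hA : ∀ m s, 2 ≤ m → m ≤ k → A m s =
      (2 * p m * (p1m * ∏ i ∈ Finset.Icc 2 (m-1), (1 - p i))
        + p m * ∑ τ ∈ Finset.Icc m (s-1), q m τ) / (1 - 2 * p m) := by
    intro m s hm2 hmk
    rcases eq_or_lt_of_le hm2 with h2 | h3
    · subst h2
      rw [hA2]
      rw [show Finset.Icc 2 (2-1) = (∅ : Finset ℕ) from rfl, Finset.prod_empty]
      ring
    · exact hAj m s (by omega) hmk
  -- unified q min formula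
  have hqmin' : ∀ m s, 2 ≤ m → m ≤ k → m ≤ s → q m s = min (A m s) (B m s) := by
    intro m s hm2 hmk hms
    rcases eq_or_lt_of_le hm2 with h2 | h3
    · subst h2; exact hq2 s hms
    · exact hqge m s (by omega) hmk hms
  have hqz : ∀ m s, 2 ≤ m → m ≤ k → 1 ≤ s → s < m → q m s = 0 := by
    intro m s hm2 hmk h1 h2
    rcases eq_or_lt_of_le hm2 with he | h3
    · subst he
      have : s = 1 := by omega
      rw [this]; exact hq21
    · exact hqlt m s (by omega) hmk h2
  -- step lemmas
  have hB2step : ∀ s, 2 ≤ s → B 2 (s+1) = B 2 s - q 2 s := by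
    intro s hs
    simp only [hB2, Nat.add_sub_cancel]
    rw [hsum (q 2) 2 s (by omega) hs]
    ring
  have hBjstep : ∀ m s, 3 ≤ m → m ≤ k → m ≤ s →
      B m (s+1) = B m s + (1 - p (m-1)) * q (m-1) s - q m s := by
    intro m s h3 hk' hms
    rw [hBj m (s+1) h3 hk', hBj m s h3 hk', Nat.add_sub_cancel,
        hsum (q (m-1)) (m-1) s (by omega) (by omega),
        hsum (q m) m s (by omega) hms]
    ring
  have hAstep : ∀ m s, 2 ≤ m → m ≤ k → m ≤ s →
      A m (s+1) = A m s + p m * q m s / (1 - 2 * p m) := by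
    intro m s h2 hk' hms
    rw [hA m (s+1) h2 hk', hA m s h2 hk', Nat.add_sub_cancel,
        hsum (q m) m s (by omega) hms]
    rw [← add_div]
    ring_nf
  -- nonnegativity of q and B
  have key : ∀ s : ℕ, ∀ m, 2 ≤ m → m ≤ k →
      (1 ≤ s → 0 ≤ q m s) ∧ (m ≤ s → 0 ≤ B m s) := by
    intro s
    induction s using Nat.strong_induction_on with
    | _ s ih =>
      intro m hm2 hmk
      have hpm : 0 < p m := hppos m hm2 hmk
      have hpmh : p m < 1/2 := phalf m hm2 hmk
      have hd : 0 < 1 - 2 * p m := by linarith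
      have hBnn : m ≤ s → 0 ≤ B m s := by
        intro hms
        rcases eq_or_lt_of_le hms with he | hlt
        · -- s = m
          subst he
          rcases eq_or_lt_of_le hm2 with h2 | h3
          · subst h2
            rw [hB2, show Finset.Icc 2 (2-1) = (∅ : Finset ℕ) from rfl, Finset.sum_empty]
            linarith
          · rw [hBj m m (by omega) hmk, Finset.Icc_self,
              Finset.Icc_eq_empty (by omega : ¬ (m ≤ m - 1)), Finset.sum_singleton,
              Finset.sum_empty]
            have hq := (ih (m-1) (by omega) (m-1) (by omega) (by omega)).1 (by omega)
            have hp' : p (m-1) < 1/2 := phalf (m-1) (by omega) (by omega)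
            have : 0 ≤ (1 - p (m-1)) * q (m-1) (m-1) :=
              mul_nonneg (by linarith) hq
            linarith
        · -- s > m
          rcases eq_or_lt_of_le hm2 with h2 | h3
          · subst h2
            have hqle : q 2 (s-1) ≤ B 2 (s-1) := by
              rw [hq2 (s-1) (by omega)]; exact min_le_right _ _
            rw [hB2, hsum (q 2) 2 (s-1) (by omega) (by omega)]
            rw [hB2] at hqle
            linarith
          · have hqle : q m (s-1) ≤ B m (s-1) := by
              rw [hqmin' m (s-1) hm2 hmk (by omega)]; exact min_le_right _ _
            have hq' := (ih (s-1) (by omega) (m-1) (by omega) (by omega)).1 (by omega)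
            have hp' : p (m-1) < 1/2 := phalf (m-1) (by omega) (by omega)
            rw [hBj m s (by omega) hmk,
                hsum (q (m-1)) (m-1) (s-1) (by omega) (by omega),
                hsum (q m) m (s-1) (by omega) (by omega)]
            rw [hBj m (s-1) (by omega) hmk] at hqle
            have : 0 ≤ (1 - p (m-1)) * q (m-1) (s-1) := mul_nonneg (by linarith) hq'
            nlinarith [this, hqle]
      refine ⟨?_, hBnn⟩
      intro hs1
      by_cases hms : m ≤ s
      · rw [hqmin' m s hm2 hmk hms]
        have hBnn' := hBnn hms
        have hAnn : 0 ≤ A m s := by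
          rw [hA m s hm2 hmk]
          have hsnn : 0 ≤ ∑ τ ∈ Finset.Icc m (s-1), q m τ := by
            apply Finset.sum_nonneg
            intro τ hτ
            simp only [Finset.mem_Icc] at hτ
            exact (ih τ (by omega) m hm2 hmk).1 (by omega)
          have hpr := hprodpos m hm2 hmk
          apply div_nonneg _ (by linarith)
          nlinarith [mul_nonneg hpm.le hsnn]
        exact le_min hAnn hBnn'
      · exact le_of_eq (hqz m s hm2 hmk hs1 (by omega)).symm
  have hqzero : ∀ m s, 2 ≤ m → m ≤ k → n m < s → q m s = 0 := by
    intro m s h2 hk' hns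
    have h1 : 0 ≤ q m s := (key s m h2 hk').1 (by omega)
    by_contra h
    have hpos : 0 < q m s := lt_of_le_of_ne h1 (Ne.symm h)
    have := hnmax m h2 hk' s hpos
    omega
  -- main argument
  intro j t hj2 hjk hnt htn hqB hBpos
  have hpj : 0 < p j := hppos j hj2 hjk
  have hpjh : p j < 1/2 := phalf j hj2 hjk
  have hd : 0 < 1 - 2 * p j := by linarith
  have hjt : j ≤ t := by
    rcases eq_or_lt_of_le hj2 with h2 | h3
    · subst h2; rw [show (2:ℕ) - 1 = 1 from rfl, hn1] at hnt; omega
    · by_contra h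
      have := hqlt j t (by omega) hjk (by omega)
      rw [hqB] at this
      linarith
  have hBA : B j t ≤ A j t := by
    have h := hqmin' j t hj2 hjk hjt
    rw [hqB] at h
    rw [h]
    exact min_le_left _ _
  have main : ∀ i, q j (t+i+1) = 0 ∧ B j (t+i+1) = 0 ∧ 0 < A j (t+i+1) := by
    intro i
    induction i with
    | zero =>
      have hBt1 : B j (t+0+1) = 0 := by
        rcases eq_or_lt_of_le hj2 with h2 | h3
        · subst h2
          rw [show t+0+1 = t+1 from rfl, hB2step t (by omega), hqB]; ring
        · rw [show t+0+1 = t+1 from rfl, hBjstep j t (by omega) hjk hjt,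
            hqzero (j-1) t (by omega) (by omega) hnt, hqB]
          ring
      have hAt1 : 0 < A j (t+0+1) := by
        rw [show t+0+1 = t+1 from rfl, hAstep j t hj2 hjk hjt, hqB]
        have : 0 < p j * B j t / (1 - 2 * p j) := div_pos (mul_pos hpj hBpos) hd
        linarith
      have hqt1 : q j (t+0+1) = 0 := by
        rw [hqmin' j (t+0+1) hj2 hjk (by omega), hBt1]
        exact min_eq_right hAt1.le
      exact ⟨hqt1, hBt1, hAt1⟩
    | succ i ih =>
      obtain ⟨hq0, hB0, hA0⟩ := ih
      have hB' : B j (t+i+1+1) = 0 := by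
        rcases eq_or_lt_of_le hj2 with h2 | h3
        · subst h2
          rw [hB2step (t+i+1) (by omega), hq0, hB0]; ring
        · rw [hBjstep j (t+i+1) (by omega) hjk (by omega),
            hqzero (j-1) (t+i+1) (by omega) (by omega) (by omega), hq0, hB0]
          ring
      have hA' : 0 < A j (t+i+1+1) := by
        rw [hAstep j (t+i+1) hj2 hjk (by omega), hq0]
        simpa using hA0
      have hq' : q j (t+i+1+1) = 0 := by
        rw [hqmin' j (t+i+1+1) hj2 hjk (by omega), hB']
        exact min_eq_right hA'.le
      exact ⟨hq', hB', hA'⟩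
  constructor
  · intro i hi
    obtain ⟨i', rfl⟩ : ∃ i', i = i' + 1 := ⟨i - 1, by omega⟩
    have h := main i'
    exact ⟨h.1, h.2.1⟩
  · by_contra h
    have hlt : t < n j := lt_of_le_of_ne htn h
    have h0 := (main (n j - t - 1)).1
    have e : t + (n j - t - 1) + 1 = n j := by omega
    rw [e] at h0
    have := hnpos j hj2 hjk
    linarith
end

section
/- The exploration rates take the following explicit values. For action 2: q_1^2 = 0; q_t^2 = (2 p_1^{-1} p_2^1 + p_2^1 Σ_{m=2}^{t−1} q_m^2)/(1 − 2 p_2^1) for 2 ≤ t < n_2; q_{n_2}^2 = p_1^0 − Σ_{m=2}^{n_2−1} q_m^2; and q_t^2 = 0 for t > n_2. For every action j with 3 ≤ j ≤ k: q_t^j = 0 for t < j; q_t^j = (2 p_j^1 Π_{i=1}^{j−1} p_i^{-1} + p_j^1 Σ_{τ=j}^{t−1} q_τ^j)/(1 − 2 p_j^1) for j ≤ t < n_j; q_{n_j}^j = p_{j−1}^{-1} Σ_{τ=j−1}^{n_j−1} q_τ^{j−1} − Σ_{τ=j}^{n_j−1} q_τ^j; and q_t^j = 0 for t > n_j. -/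
private lemma sum_top2 (f : ℕ → ℝ) {a t : ℕ} (ha : 1 ≤ a) (h : a ≤ t) :
    ∑ τ ∈ Finset.Icc a (t+1-1), f τ = (∑ τ ∈ Finset.Icc a (t-1), f τ) + f t := by
  have h1 : t+1-1 = (t-1)+1 := by omega
  have h2 : (t-1)+1 = t := by omega
  rw [h1, Finset.sum_Icc_succ_top (by omega), h2]

private lemma prod_top2 (f : ℕ → ℝ) {a t : ℕ} (ha : 1 ≤ a) (h : a ≤ t) :
    ∏ τ ∈ Finset.Icc a (t+1-1), f τ = (∏ τ ∈ Finset.Icc a (t-1), f τ) * f t := by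
  have h1 : t+1-1 = (t-1)+1 := by omega
  have h2 : (t-1)+1 = t := by omega
  rw [h1, Finset.prod_Icc_succ_top (by omega), h2]

private lemma empty_Icc2 {a : ℕ} (ha : 1 ≤ a) : Finset.Icc a (a-1) = ∅ :=
  Finset.Icc_eq_empty (by omega)

/-- General analysis of the recursion `q t = min (A t) (B t)` with budget `G`:
`G` is monotone, constant after `N`, and `A ≤ B` is guaranteed for `t ≤ N`
as long as the history is in `A`-mode (hypothesis `hearly`). -/
private lemma levelL (s : ℕ) (hs : 1 ≤ s) (p c : ℝ) (hp : 0 < p) (hp2 : p < 1/2) (hc : 0 < c)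
    (G : ℕ → ℝ) (N : ℕ)
    (hGs : 0 < G s)
    (hGmono : ∀ t, s ≤ t → G t ≤ G (t+1))
    (hGconst : ∀ t, N < t → G (t+1) = G t)
    (q : ℕ → ℝ)
    (hq : ∀ t, s ≤ t → q t = min ((2*p*c + p * ∑ τ ∈ Finset.Icc s (t-1), q τ)/(1-2*p))
        (G t - ∑ τ ∈ Finset.Icc s (t-1), q τ))
    (hearly : ∀ t, s ≤ t → t ≤ N →
      (∀ τ, s ≤ τ → τ < t → q τ = (2*p*c + p * ∑ x ∈ Finset.Icc s (τ-1), q x)/(1-2*p)) →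
      (2*p*c + p * ∑ τ ∈ Finset.Icc s (t-1), q τ)/(1-2*p)
        ≤ G t - ∑ τ ∈ Finset.Icc s (t-1), q τ)
    (n : ℕ) (hn : 0 < q n) (hnmaxx : ∀ t, 0 < q t → t ≤ n) :
    (∀ t, s ≤ t → 0 ≤ q t) ∧ 0 < q s ∧ s ≤ n ∧
    (∀ t, s ≤ t → t < n → q t = (2*p*c + p * ∑ τ ∈ Finset.Icc s (t-1), q τ)/(1-2*p)) ∧
    (q n = G n - ∑ τ ∈ Finset.Icc s (n-1), q τ) ∧
    (∀ t, n < t → q t = 0) := by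
  have hd : (0:ℝ) < 1 - 2*p := by linarith
  have hSrec : ∀ t, s ≤ t →
      (∑ τ ∈ Finset.Icc s (t+1-1), q τ) = (∑ τ ∈ Finset.Icc s (t-1), q τ) + q t :=
    fun t ht => sum_top2 q hs ht
  have hApos : ∀ t : ℕ, 0 ≤ (∑ τ ∈ Finset.Icc s (t-1), q τ) →
      0 < (2*p*c + p * ∑ τ ∈ Finset.Icc s (t-1), q τ)/(1-2*p) := by
    intro t hS
    apply div_pos _ hd
    nlinarith
  -- nonnegativity invariant
  have hinv : ∀ t, s ≤ t → (0 ≤ ∑ τ ∈ Finset.Icc s (t-1), q τ) ∧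
      (0 ≤ G t - ∑ τ ∈ Finset.Icc s (t-1), q τ) := by
    intro t ht
    induction t, ht using Nat.le_induction with
    | base =>
      rw [empty_Icc2 hs]
      simp only [Finset.sum_empty]
      exact ⟨le_rfl, by linarith⟩
    | succ t ht ih =>
      obtain ⟨h1, h2⟩ := ih
      have hqt1 : 0 ≤ q t := by
        rw [hq t ht]
        exact le_min (le_of_lt (hApos t h1)) h2
      have hqt2 : q t ≤ G t - ∑ τ ∈ Finset.Icc s (t-1), q τ := by
        rw [hq t ht]; exact min_le_right _ _
      rw [hSrec t ht]
      exact ⟨by linarith, by have := hGmono t ht; linarith⟩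
  have hq0 : ∀ t, s ≤ t → 0 ≤ q t := by
    intro t ht
    obtain ⟨h1, h2⟩ := hinv t ht
    rw [hq t ht]
    exact le_min (le_of_lt (hApos t h1)) h2
  have hqs : 0 < q s := by
    rw [hq s le_rfl, empty_Icc2 hs]
    simp only [Finset.sum_empty]
    apply lt_min
    · apply div_pos _ hd; nlinarith
    · simpa using hGs
  have hsn : s ≤ n := hnmaxx s hqs
  have hzero : ∀ t, n < t → q t = 0 := by
    intro t ht
    have h1 : 0 ≤ q t := hq0 t (by omega)
    by_contra h
    have : 0 < q t := lt_of_le_of_ne h1 (Ne.symm h)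
    exact absurd (hnmaxx t this) (by omega)
  have hqn : q n = G n - ∑ τ ∈ Finset.Icc s (n-1), q τ := by
    have h1 : q (n+1) = 0 := hzero _ (by omega)
    have h2 := hq (n+1) (by omega)
    have hS := hSrec n hsn
    have hSpos := (hinv (n+1) (by omega)).1
    have hA1 : 0 < (2*p*c + p * ∑ τ ∈ Finset.Icc s (n+1-1), q τ)/(1-2*p) := hApos (n+1) hSpos
    have hB1 : G (n+1) - ∑ τ ∈ Finset.Icc s (n+1-1), q τ ≤ 0 := by
      by_contra hB
      push_neg at hB
      rw [h1] at h2
      have := lt_min hA1 hB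
      rw [← h2] at this
      exact lt_irrefl _ this
    have hqle : q n ≤ G n - ∑ τ ∈ Finset.Icc s (n-1), q τ := by
      rw [hq n hsn]; exact min_le_right _ _
    have hGm := hGmono n hsn
    rw [hS] at hB1
    linarith
  -- zero propagation after the budget binds (past N)
  have hprop : ∀ t, s ≤ t → N < t →
      (G t - ∑ τ ∈ Finset.Icc s (t-1), q τ
        < (2*p*c + p * ∑ τ ∈ Finset.Icc s (t-1), q τ)/(1-2*p)) →
      ∀ m, t < m → q m = 0 := by
    intro t hst htN hBA
    have hqt : q t = G t - ∑ τ ∈ Finset.Icc s (t-1), q τ := by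
      rw [hq t hst]; exact min_eq_right (le_of_lt hBA)
    have hB0 : ∀ m, t+1 ≤ m → G m - ∑ τ ∈ Finset.Icc s (m-1), q τ ≤ 0 := by
      intro m hm
      induction m, hm using Nat.le_induction with
      | base =>
        rw [hSrec t hst, hGconst t htN, hqt]
        linarith
      | succ m hm ih =>
        have hms : s ≤ m := by omega
        have hqm : q m = 0 := by
          have h1 := hq0 m hms
          have h2 : q m ≤ G m - ∑ τ ∈ Finset.Icc s (m-1), q τ := by
            rw [hq m hms]; exact min_le_right _ _
          linarith
        rw [hSrec m hms, hGconst m (by omega), hqm]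
        linarith
    intro m hm
    have h1 := hq0 m (by omega)
    have h2 : q m ≤ G m - ∑ τ ∈ Finset.Icc s (m-1), q τ := by
      rw [hq m (by omega)]; exact min_le_right _ _
    have h3 := hB0 m (by omega)
    linarith
  -- A-mode before n
  have hAmode : ∀ t, s ≤ t → t < n →
      q t = (2*p*c + p * ∑ τ ∈ Finset.Icc s (t-1), q τ)/(1-2*p) := by
    intro t
    induction t using Nat.strong_induction_on with
    | _ t IH =>
      intro hst htn
      have hprev : ∀ τ, s ≤ τ → τ < t →
          q τ = (2*p*c + p * ∑ x ∈ Finset.Icc s (τ-1), q x)/(1-2*p) :=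
        fun τ h1 h2 => IH τ h2 h1 (by omega)
      have hAB : (2*p*c + p * ∑ τ ∈ Finset.Icc s (t-1), q τ)/(1-2*p)
          ≤ G t - ∑ τ ∈ Finset.Icc s (t-1), q τ := by
        rcases le_or_gt t N with htN | hNt
        · exact hearly t hst htN hprev
        · by_contra hlt
          push_neg at hlt
          have := hprop t hst hNt hlt n (by omega)
          rw [this] at hn
          exact lt_irrefl _ hn
      rw [hq t hst]
      exact min_eq_left hAB
  exact ⟨hq0, hqs, hsn, hAmode, hqn, hzero⟩

/-- While the previous level is still exploring (t ≤ N), `A`-mode history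
implies the budget does not bind: `A t ≤ B t`. -/
private lemma earlyL (s : ℕ) (hs : 2 ≤ s) (p p' c' : ℝ)
    (hp : 0 < p) (hpp' : p < p') (hp' : p' < 1/2) (hc' : 0 < c')
    (q' q : ℕ → ℝ) (N : ℕ)
    (hq'A : ∀ τ, s-1 ≤ τ → τ < N → q' τ =
      (2*p'*c' + p' * ∑ x ∈ Finset.Icc (s-1) (τ-1), q' x)/(1-2*p')) :
    ∀ t, s ≤ t → t ≤ N →
    (∀ τ, s ≤ τ → τ < t →
      q τ = (2*p*(c'*(1-p')) + p * ∑ x ∈ Finset.Icc s (τ-1), q x)/(1-2*p)) →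
    (2*p*(c'*(1-p')) + p * ∑ τ ∈ Finset.Icc s (t-1), q τ)/(1-2*p)
      ≤ (1-p') * (∑ τ ∈ Finset.Icc (s-1) (t-1), q' τ) - ∑ τ ∈ Finset.Icc s (t-1), q τ := by
  have hd : (0:ℝ) < 1 - 2*p := by linarith
  have hd' : (0:ℝ) < 1 - 2*p' := by linarith
  have hp'1 : (0:ℝ) < 1 - p' := by linarith
  have hp1 : (0:ℝ) < 1 - p := by linarith
  have hd0 : (1-2*p) ≠ 0 := ne_of_gt hd
  have hd'0 : (1-2*p') ≠ 0 := ne_of_gt hd'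
  have hrpos : (0:ℝ) < (1-p)/(1-2*p) := div_pos hp1 hd
  have hr'pos : (0:ℝ) < (1-p')/(1-2*p') := div_pos hp'1 hd'
  have hr : (1-p)/(1-2*p) ≤ (1-p')/(1-2*p') := by
    rw [div_le_div_iff₀ hd hd']; nlinarith
  set c : ℝ := c' * (1-p') with hcdef
  have hc : 0 < c := mul_pos hc' hp'1
  have key : ∀ t, s ≤ t → t ≤ N →
      (∀ τ, s ≤ τ → τ < t →
        q τ = (2*p*c + p * ∑ x ∈ Finset.Icc s (τ-1), q x)/(1-2*p)) →
      (0 < (2*p*c + p * ∑ τ ∈ Finset.Icc s (t-1), q τ)/(1-2*p)) ∧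
      ((2*p*c + p * ∑ τ ∈ Finset.Icc s (t-1), q τ)/(1-2*p)
        ≤ (1-p') * (∑ τ ∈ Finset.Icc (s-1) (t-1), q' τ) - ∑ τ ∈ Finset.Icc s (t-1), q τ) ∧
      (((1-p)/(1-2*p)) * ((2*p*c + p * ∑ τ ∈ Finset.Icc s (t-1), q τ)/(1-2*p))
        ≤ (1-p') * ((2*p'*c' + p' * ∑ x ∈ Finset.Icc (s-1) (t-1), q' x)/(1-2*p'))) := by
    intro t hst
    induction t, hst using Nat.le_induction with
    | base =>
      intro hsN _
      have hq's : q' (s-1) = 2*p'*c'/(1-2*p') := by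
        rw [hq'A (s-1) le_rfl (by omega), empty_Icc2 (by omega)]
        simp
      have hsum' : ∑ τ ∈ Finset.Icc (s-1) (s-1), q' τ = 2*p'*c'/(1-2*p') := by
        rw [Finset.Icc_self, Finset.sum_singleton, hq's]
      rw [empty_Icc2 (by omega : 1 ≤ s), hsum']
      simp only [Finset.sum_empty, mul_zero, add_zero, sub_zero]
      refine ⟨?_, ?_, ?_⟩
      · apply div_pos _ hd; nlinarith
      · have e : (1-p') * (2*p'*c'/(1-2*p')) = (2*p'*c'*(1-p'))/(1-2*p') := by ring
        rw [hcdef, e, div_le_div_iff₀ hd hd']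
        nlinarith [mul_nonneg (le_of_lt (mul_pos hc' hp'1))
          (by linarith : (0:ℝ) ≤ p' - p)]
      · have e1 : ((1-p)/(1-2*p)) * ((2*p*c)/(1-2*p))
            = (2*p*(1-p)*c) / ((1-2*p)*(1-2*p)) := by
          field_simp
        have e2 : (1-p') * ((2*p'*c' + p'*(2*p'*c'/(1-2*p')))/(1-2*p'))
            = (2*p'*c'*(1-p')*(1-p')) / ((1-2*p')*(1-2*p')) := by
          field_simp
          ring_nf
          field_simp
          ring
        rw [hcdef] at e1 ⊢
        rw [e1, e2, div_le_div_iff₀ (mul_pos hd hd) (mul_pos hd' hd')]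
        nlinarith [mul_nonneg (le_of_lt (mul_pos hc' hp'1))
          (mul_nonneg (by linarith : (0:ℝ) ≤ p' - p) (by linarith : (0:ℝ) ≤ 1 - p - p'))]
    | succ t hst ih =>
      intro htN hmode
      obtain ⟨hA0, hAB, hAr⟩ := ih (by omega) (fun τ h1 h2 => hmode τ h1 (by omega))
      have hqt : q t = (2*p*c + p * ∑ x ∈ Finset.Icc s (t-1), q x)/(1-2*p) :=
        hmode t hst (by omega)
      have hq't : q' t = (2*p'*c' + p' * ∑ x ∈ Finset.Icc (s-1) (t-1), q' x)/(1-2*p') :=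
        hq'A t (by omega) (by omega)
      have hsr : ∑ τ ∈ Finset.Icc s (t+1-1), q τ
          = (∑ τ ∈ Finset.Icc s (t-1), q τ) + q t := sum_top2 q (by omega) hst
      have hsr' : ∑ τ ∈ Finset.Icc (s-1) (t+1-1), q' τ
          = (∑ τ ∈ Finset.Icc (s-1) (t-1), q' τ) + q' t := sum_top2 q' (by omega) (by omega)
      have factA : (2*p*c + p * ((∑ x ∈ Finset.Icc s (t-1), q x) + q t))/(1-2*p)
          = ((1-p)/(1-2*p)) * ((2*p*c + p * ∑ x ∈ Finset.Icc s (t-1), q x)/(1-2*p)) := by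
        rw [hqt]
        field_simp
        ring
      have factA' : (2*p'*c' + p' * ((∑ x ∈ Finset.Icc (s-1) (t-1), q' x) + q' t))/(1-2*p')
          = ((1-p')/(1-2*p'))
            * ((2*p'*c' + p' * ∑ x ∈ Finset.Icc (s-1) (t-1), q' x)/(1-2*p')) := by
        rw [hq't]
        field_simp
        ring
      rw [hsr, hsr', factA, factA']
      refine ⟨mul_pos hrpos hA0, ?_, ?_⟩
      · rw [hqt]
        have h2 : ((1-p)/(1-2*p)) * ((2*p*c + p * ∑ x ∈ Finset.Icc s (t-1), q x)/(1-2*p))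
            ≤ (1-p') * q' t := by rw [hq't]; exact hAr
        rw [hq't] at h2 ⊢
        linarith
      · calc ((1-p)/(1-2*p)) * (((1-p)/(1-2*p))
              * ((2*p*c + p * ∑ x ∈ Finset.Icc s (t-1), q x)/(1-2*p)))
            ≤ ((1-p')/(1-2*p')) * (((1-p)/(1-2*p))
              * ((2*p*c + p * ∑ x ∈ Finset.Icc s (t-1), q x)/(1-2*p))) := by
              apply mul_le_mul_of_nonneg_right hr
              exact le_of_lt (mul_pos hrpos hA0)
          _ ≤ ((1-p')/(1-2*p')) * ((1-p')
              * ((2*p'*c' + p' * ∑ x ∈ Finset.Icc (s-1) (t-1), q' x)/(1-2*p'))) := by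
              apply mul_le_mul_of_nonneg_left hAr (le_of_lt hr'pos)
          _ = (1-p') * (((1-p')/(1-2*p'))
              * ((2*p'*c' + p' * ∑ x ∈ Finset.Icc (s-1) (t-1), q' x)/(1-2*p'))) := by ring
  intro t hst htN hmode
  exact (key t hst htN hmode).2.1

theorem stmt_6
    (k : ℕ) (hk : 3 ≤ k)
    (p1m p10 : ℝ) (hp1m : 0 < p1m) (hp10 : 0 < p10) (hp1sum : p1m + p10 ≤ 1)
    (p : ℕ → ℝ)
    (hp2 : p 2 < 1/2) (hpk : 0 < p k)
    (hpdec : ∀ j : ℕ, 2 ≤ j → j < k → p (j+1) < p j)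
    (A B q : ℕ → ℕ → ℝ)
    (hA2 : ∀ t : ℕ, A 2 t =
      (2 * p1m * p 2 + p 2 * ∑ m ∈ Finset.Icc 2 (t-1), q 2 m) / (1 - 2 * p 2))
    (hB2 : ∀ t : ℕ, B 2 t = p10 - ∑ m ∈ Finset.Icc 2 (t-1), q 2 m)
    (hAj : ∀ j t : ℕ, 3 ≤ j → j ≤ k →
      A j t = (2 * p j * (p1m * ∏ i ∈ Finset.Icc 2 (j-1), (1 - p i))
        + p j * ∑ τ ∈ Finset.Icc j (t-1), q j τ) / (1 - 2 * p j))
    (hBj : ∀ j t : ℕ, 3 ≤ j → j ≤ k →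
      B j t = (1 - p (j-1)) * ∑ τ ∈ Finset.Icc (j-1) (t-1), q (j-1) τ
        - ∑ τ ∈ Finset.Icc j (t-1), q j τ)
    (hq21 : q 2 1 = 0)
    (hq2 : ∀ t : ℕ, 2 ≤ t → q 2 t = min (A 2 t) (B 2 t))
    (hqlt : ∀ j t : ℕ, 3 ≤ j → j ≤ k → t < j → q j t = 0)
    (hqge : ∀ j t : ℕ, 3 ≤ j → j ≤ k → j ≤ t → q j t = min (A j t) (B j t))
    (n : ℕ → ℕ) (hn1 : n 1 = 1)
    (hnpos : ∀ j : ℕ, 2 ≤ j → j ≤ k → 0 < q j (n j))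
    (hnmax : ∀ j : ℕ, 2 ≤ j → j ≤ k → ∀ t : ℕ, 0 < q j t → t ≤ n j)
    (ρ : ℕ → ℝ)
    (hρ : ∀ j : ℕ, 2 ≤ j → j ≤ k → ρ j = p10 * ∏ i ∈ Finset.Icc 2 (j-1), (1 - p i))
    (f : ℝ → ℕ → ℕ)
    (hf : ∀ y : ℝ, 0 < y → y ≤ 1 → ∀ j : ℕ, 2 ≤ j → j ≤ k →
      (∑ τ ∈ Finset.Icc 1 (f y j - 1), q j τ < y * ρ j) ∧
      (∀ t : ℕ, (∑ τ ∈ Finset.Icc 1 (t-1), q j τ < y * ρ j) → t ≤ f y j)) :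
    (q 2 1 = 0) ∧
    (∀ t : ℕ, 2 ≤ t → t < n 2 →
      q 2 t = (2 * p1m * p 2 + p 2 * ∑ m ∈ Finset.Icc 2 (t-1), q 2 m) / (1 - 2 * p 2)) ∧
    (q 2 (n 2) = p10 - ∑ m ∈ Finset.Icc 2 (n 2 - 1), q 2 m) ∧
    (∀ t : ℕ, n 2 < t → q 2 t = 0) ∧
    (∀ j : ℕ, 3 ≤ j → j ≤ k →
      (∀ t : ℕ, t < j → q j t = 0) ∧
      (∀ t : ℕ, j ≤ t → t < n j →
        q j t = (2 * p j * (p1m * ∏ i ∈ Finset.Icc 2 (j-1), (1 - p i))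
          + p j * ∑ τ ∈ Finset.Icc j (t-1), q j τ) / (1 - 2 * p j)) ∧
      (q j (n j) = (1 - p (j-1)) * ∑ τ ∈ Finset.Icc (j-1) (n j - 1), q (j-1) τ
        - ∑ τ ∈ Finset.Icc j (n j - 1), q j τ) ∧
      (∀ t : ℕ, n j < t → q j t = 0)) := by
  -- facts about the probabilities
  have hppos : ∀ j, 2 ≤ j → j ≤ k → 0 < p j := by
    have haux : ∀ m, ∀ j, 2 ≤ j → j + m = k → 0 < p j := by
      intro m
      induction m with
      | zero =>
        intro j h2 hjk
        have hjk' : j = k := by omega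
        subst hjk'
        exact hpk
      | succ m ih =>
        intro j h2 hjk
        have h1 : p (j+1) < p j := hpdec j h2 (by omega)
        have h3 := ih (j+1) (by omega) (by omega)
        linarith
    intro j h2 hjk
    exact haux (k - j) j h2 (by omega)
  have hple : ∀ j, 2 ≤ j → j ≤ k → p j < 1/2 := by
    have haux : ∀ j, 2 ≤ j → j ≤ k → p j ≤ p 2 := by
      intro j h2
      induction j, h2 using Nat.le_induction with
      | base => intro _; exact le_rfl
      | succ j hj ih =>
        intro hjk
        have h1 : p (j+1) < p j := hpdec j hj (by omega)
        have h2 := ih (by omega)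
        linarith
    intro j h2 hjk
    have := haux j h2 hjk
    linarith
  have hCpos : ∀ j, 2 ≤ j → j ≤ k →
      0 < p1m * ∏ i ∈ Finset.Icc 2 (j-1), (1 - p i) := by
    intro j h2 hjk
    apply mul_pos hp1m
    apply Finset.prod_pos
    intro i hi
    rw [Finset.mem_Icc] at hi
    have := hple i hi.1 (by omega)
    linarith
  have he21 : Finset.Icc 2 (2-1) = (∅ : Finset ℕ) := Finset.Icc_eq_empty (by omega)
  -- the main induction over levels
  have PACK : ∀ j, 2 ≤ j → j ≤ k →
      ((∀ t, j ≤ t → 0 ≤ q j t) ∧ 0 < q j j ∧ j ≤ n j ∧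
       (∀ t, j ≤ t → t < n j → q j t =
         (2 * p j * (p1m * ∏ i ∈ Finset.Icc 2 (j-1), (1 - p i))
           + p j * ∑ τ ∈ Finset.Icc j (t-1), q j τ) / (1 - 2 * p j)) ∧
       (q j (n j) = (if j = 2 then p10 else
          (1 - p (j-1)) * ∑ τ ∈ Finset.Icc (j-1) (n j - 1), q (j-1) τ)
          - ∑ τ ∈ Finset.Icc j (n j - 1), q j τ) ∧
       (∀ t, n j < t → q j t = 0)) := by
    intro j hj
    induction j, hj using Nat.le_induction with
    | base =>
      intro h2k
      have hc2 : 0 < p1m * ∏ i ∈ Finset.Icc 2 (2-1), (1 - p i) := by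
        rw [he21]; simpa using hp1m
      have hq_2 : ∀ t, 2 ≤ t → q 2 t =
          min ((2 * p 2 * (p1m * ∏ i ∈ Finset.Icc 2 (2-1), (1 - p i))
            + p 2 * ∑ τ ∈ Finset.Icc 2 (t-1), q 2 τ) / (1 - 2 * p 2))
          ((fun _ => p10) t - ∑ τ ∈ Finset.Icc 2 (t-1), q 2 τ) := by
        intro t ht
        rw [hq2 t ht, hA2 t, hB2 t]
        congr 1
        rw [he21]
        simp only [Finset.prod_empty, mul_one]
        ring
      obtain ⟨L1, L2, L3, L4, L5, L6⟩ :=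
        levelL 2 (by norm_num) (p 2) (p1m * ∏ i ∈ Finset.Icc 2 (2-1), (1 - p i))
          (hppos 2 le_rfl (by omega)) hp2 hc2
          (fun _ => p10) 1 hp10 (fun t _ => le_rfl) (fun t _ => rfl)
          (q 2) hq_2 (by intro t h1 h2 _; omega)
          (n 2) (hnpos 2 le_rfl (by omega)) (hnmax 2 le_rfl (by omega))
      exact ⟨L1, L2, L3, L4, by rw [if_pos rfl]; exact L5, L6⟩
    | succ j hj ih =>
      intro hjk1
      obtain ⟨P1, P2, P3, P4, P5, P6⟩ := ih (by omega)
      have hpj : 0 < p j := hppos j hj (by omega)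
      have hplej : p j < 1/2 := hple j hj (by omega)
      have hpj1 : 0 < p (j+1) := hppos (j+1) (by omega) hjk1
      have hplej1 : p (j+1) < 1/2 := hple (j+1) (by omega) hjk1
      have hdecj : p (j+1) < p j := hpdec j hj (by omega)
      have hCj : 0 < p1m * ∏ i ∈ Finset.Icc 2 (j-1), (1 - p i) := hCpos j hj (by omega)
      have hCrel : p1m * ∏ i ∈ Finset.Icc 2 j, (1-p i)
          = (p1m * ∏ i ∈ Finset.Icc 2 (j-1), (1-p i)) * (1-p j) := by
        have hpr := prod_top2 (fun i => 1 - p i) (show (1:ℕ) ≤ 2 by norm_num) hj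
        simp only [Nat.add_sub_cancel] at hpr
        rw [hpr]
        ring
      have hCj1 : 0 < p1m * ∏ i ∈ Finset.Icc 2 j, (1 - p i) := by
        rw [hCrel]
        apply mul_pos hCj
        linarith
      -- the previous level in A-mode, reindexed
      have hq'A : ∀ τ, (j+1)-1 ≤ τ → τ < n j → q j τ =
          (2 * p j * (p1m * ∏ i ∈ Finset.Icc 2 (j-1), (1 - p i))
            + p j * ∑ x ∈ Finset.Icc ((j+1)-1) (τ-1), q j x) / (1 - 2 * p j) := by
        simp only [Nat.add_sub_cancel]
        exact P4
      obtain ⟨L1, L2, L3, L4, L5, L6⟩ :=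
        levelL (j+1) (by omega) (p (j+1)) (p1m * ∏ i ∈ Finset.Icc 2 j, (1 - p i))
          hpj1 hplej1 hCj1
          (fun t => (1 - p j) * ∑ τ ∈ Finset.Icc j (t-1), q j τ) (n j)
          (by
            simp only [Nat.add_sub_cancel, Finset.Icc_self, Finset.sum_singleton]
            exact mul_pos (by linarith) P2)
          (by
            intro t ht
            rw [sum_top2 (q j) (by omega) (by omega)]
            have h1 : 0 ≤ q j t := P1 t (by omega)
            nlinarith)
          (by
            intro t ht
            rw [sum_top2 (q j) (by omega) (by omega : j ≤ t), P6 t ht, add_zero])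
          (q (j+1))
          (by
            intro t ht
            rw [hqge (j+1) t (by omega) hjk1 ht, hAj (j+1) t (by omega) hjk1,
              hBj (j+1) t (by omega) hjk1]
            simp only [Nat.add_sub_cancel])
          (by
            intro t ht htN hmode
            have hmode' : ∀ τ, j+1 ≤ τ → τ < t → q (j+1) τ =
                (2 * p (j+1) * ((p1m * ∏ i ∈ Finset.Icc 2 (j-1), (1 - p i)) * (1 - p j))
                  + p (j+1) * ∑ x ∈ Finset.Icc (j+1) (τ-1), q (j+1) x)
                  / (1 - 2 * p (j+1)) := by
              intro τ h1 h2
              rw [hmode τ h1 h2, hCrel]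
            have HE := earlyL (j+1) (by omega) (p (j+1)) (p j)
              (p1m * ∏ i ∈ Finset.Icc 2 (j-1), (1 - p i))
              hpj1 hdecj hplej hCj (q j) (q (j+1)) (n j) hq'A t ht htN hmode'
            simp only [Nat.add_sub_cancel] at HE
            rw [hCrel]
            exact HE)
          (n (j+1)) (hnpos (j+1) (by omega) hjk1) (hnmax (j+1) (by omega) hjk1)
      refine ⟨L1, L2, L3, ?_, ?_, L6⟩
      · simp only [Nat.add_sub_cancel]
        exact L4
      · rw [if_neg (by omega : ¬ j + 1 = 2)]
        simp only [Nat.add_sub_cancel]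
        exact L5
  obtain ⟨Q1, Q2, Q3, Q4, Q5, Q6⟩ := PACK 2 le_rfl (by omega)
  refine ⟨hq21, ?_, ?_, Q6, ?_⟩
  · intro t ht htn
    rw [Q4 t ht htn, he21]
    simp only [Finset.prod_empty, mul_one]
    ring
  · rw [if_pos rfl] at Q5
    exact Q5
  · intro j h3 hjk
    obtain ⟨R1, R2, R3, R4, R5, R6⟩ := PACK j (by omega) hjk
    refine ⟨fun t ht => hqlt j t h3 hjk ht, R4, ?_, R6⟩
    rw [if_neg (by omega : ¬ j = 2)] at R5
    exact R5
end

section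
/- For every action j with 2 ≤ j ≤ k, the total exploration rate of action j equals ρ_j, i.e., Σ_{t=j}^{n_j} q_t^j = ρ_j. -/
theorem stmt_7
    (k : ℕ) (hk : 3 ≤ k)
    (p1m p10 : ℝ) (hp1m : 0 < p1m) (hp10 : 0 < p10) (hp1sum : p1m + p10 ≤ 1)
    (p : ℕ → ℝ)
    (hp2 : p 2 < 1/2) (hpk : 0 < p k)
    (hpdec : ∀ j : ℕ, 2 ≤ j → j < k → p (j+1) < p j)
    (A B q : ℕ → ℕ → ℝ)
    (hA2 : ∀ t : ℕ, A 2 t =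
      (2 * p1m * p 2 + p 2 * ∑ m ∈ Finset.Icc 2 (t-1), q 2 m) / (1 - 2 * p 2))
    (hB2 : ∀ t : ℕ, B 2 t = p10 - ∑ m ∈ Finset.Icc 2 (t-1), q 2 m)
    (hAj : ∀ j t : ℕ, 3 ≤ j → j ≤ k →
      A j t = (2 * p j * (p1m * ∏ i ∈ Finset.Icc 2 (j-1), (1 - p i))
        + p j * ∑ τ ∈ Finset.Icc j (t-1), q j τ) / (1 - 2 * p j))
    (hBj : ∀ j t : ℕ, 3 ≤ j → j ≤ k →
      B j t = (1 - p (j-1)) * ∑ τ ∈ Finset.Icc (j-1) (t-1), q (j-1) τ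
        - ∑ τ ∈ Finset.Icc j (t-1), q j τ)
    (hq21 : q 2 1 = 0)
    (hq2 : ∀ t : ℕ, 2 ≤ t → q 2 t = min (A 2 t) (B 2 t))
    (hqlt : ∀ j t : ℕ, 3 ≤ j → j ≤ k → t < j → q j t = 0)
    (hqge : ∀ j t : ℕ, 3 ≤ j → j ≤ k → j ≤ t → q j t = min (A j t) (B j t))
    (n : ℕ → ℕ) (hn1 : n 1 = 1)
    (hnpos : ∀ j : ℕ, 2 ≤ j → j ≤ k → 0 < q j (n j))
    (hnmax : ∀ j : ℕ, 2 ≤ j → j ≤ k → ∀ t : ℕ, 0 < q j t → t ≤ n j)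
    (ρ : ℕ → ℝ)
    (hρ : ∀ j : ℕ, 2 ≤ j → j ≤ k → ρ j = p10 * ∏ i ∈ Finset.Icc 2 (j-1), (1 - p i))
    (f : ℝ → ℕ → ℕ)
    (hf : ∀ y : ℝ, 0 < y → y ≤ 1 → ∀ j : ℕ, 2 ≤ j → j ≤ k →
      (∑ τ ∈ Finset.Icc 1 (f y j - 1), q j τ < y * ρ j) ∧
      (∀ t : ℕ, (∑ τ ∈ Finset.Icc 1 (t-1), q j τ < y * ρ j) → t ≤ f y j)) :
    ∀ j : ℕ, 2 ≤ j → j ≤ k → ∑ t ∈ Finset.Icc j (n j), q j t = ρ j := by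
  -- monotonicity and positivity facts about p
  have hpmono : ∀ i j : ℕ, 2 ≤ i → i ≤ j → (j ≤ k → p j ≤ p i) := by
    intro i j hi2 hij
    induction j, hij using Nat.le_induction with
    | base => exact fun _ => le_rfl
    | succ m hm ihm =>
      intro hk1
      exact le_trans (hpdec m (hi2.trans hm) (by omega)).le (ihm (by omega))
  have hppos : ∀ j, 2 ≤ j → j ≤ k → 0 < p j :=
    fun j hj2 hjk => lt_of_lt_of_le hpk (hpmono j k hj2 hjk le_rfl)
  have hplt : ∀ j, 2 ≤ j → j ≤ k → p j < 1/2 :=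
    fun j hj2 hjk => lt_of_le_of_lt (hpmono 2 j le_rfl hj2 hjk) hp2
  have hprodpos : ∀ m, m ≤ k → 0 < ∏ i ∈ Finset.Icc 2 m, (1 - p i) := by
    intro m hm
    apply Finset.prod_pos
    intro i hi
    obtain ⟨h2i, him⟩ := Finset.mem_Icc.mp hi
    have := hplt i h2i (him.trans hm)
    linarith
  have hρstep : ∀ j, 2 ≤ j → j + 1 ≤ k → ρ (j+1) = ρ j * (1 - p j) := by
    intro j hj2 hjk
    obtain ⟨m, rfl⟩ : ∃ m, j = m + 1 := ⟨j - 1, by omega⟩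
    rw [hρ (m+1+1) (by omega) hjk, hρ (m+1) (by omega) (by omega)]
    simp only [Nat.add_sub_cancel]
    rw [Finset.prod_Icc_succ_top (by omega : 2 ≤ m + 1)]
    ring
  have hρpos : ∀ j, 2 ≤ j → j ≤ k → 0 < ρ j := by
    intro j hj2 hjk
    rw [hρ j hj2 hjk]
    exact mul_pos hp10 (hprodpos (j-1) (by omega))
  -- main induction
  have main : ∀ j : ℕ, 2 ≤ j → j ≤ k →
      (∀ t, j ≤ t → 0 ≤ q j t) ∧
      (∀ t, (∑ τ ∈ Finset.Icc j t, q j τ) ≤ ρ j) ∧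
      (∃ N, ∀ t, N ≤ t → (∑ τ ∈ Finset.Icc j t, q j τ) = ρ j) := by
    intro j hj2
    induction j, hj2 using Nat.le_induction with
    | base =>
      intro hk2
      have hρ2 : ρ 2 = p10 := by
        rw [hρ 2 le_rfl hk2, Finset.Icc_eq_empty (by omega)]
        simp
      have hp2pos : 0 < p 2 := hppos 2 le_rfl hk2
      have hSle : ∀ t, (∑ m ∈ Finset.Icc 2 t, q 2 m) ≤ p10 := by
        intro t
        rcases Nat.lt_or_ge t 2 with h | h
        · rw [Finset.Icc_eq_empty (by omega)]
          simpa using hp10.le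
        · obtain ⟨s, rfl⟩ : ∃ s, t = s + 1 := ⟨t - 1, by omega⟩
          rw [Finset.sum_Icc_succ_top (by omega : 2 ≤ s + 1)]
          have hqB : q 2 (s+1) ≤ B 2 (s+1) := by
            rw [hq2 (s+1) h]; exact min_le_right _ _
          rw [hB2 (s+1)] at hqB
          simp only [Nat.add_sub_cancel] at hqB
          linarith
      have hqnn : ∀ t, 2 ≤ t → 0 ≤ q 2 t := by
        intro t
        induction t using Nat.strong_induction_on with
        | _ t ih =>
          intro ht
          have hSnn : 0 ≤ ∑ m ∈ Finset.Icc 2 (t-1), q 2 m :=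
            Finset.sum_nonneg fun τ hτ => by
              obtain ⟨h1, h2'⟩ := Finset.mem_Icc.mp hτ
              exact ih τ (by omega) h1
          rw [hq2 t ht]
          apply le_min
          · rw [hA2 t]
            apply div_nonneg
            · nlinarith
            · have := hplt 2 le_rfl hk2; linarith
          · rw [hB2 t]
            have := hSle (t-1)
            linarith
      refine ⟨hqnn, fun t => (hSle t).trans_eq hρ2.symm, ⟨max (n 2) 2, fun t ht => ?_⟩⟩
      have htn : n 2 ≤ t := le_trans (le_max_left _ _) ht
      have hq0 : q 2 (t+1) ≤ 0 := by
        by_contra h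
        push_neg at h
        exact absurd (hnmax 2 le_rfl hk2 (t+1) h) (by omega)
      have hSnn : 0 ≤ ∑ m ∈ Finset.Icc 2 t, q 2 m :=
        Finset.sum_nonneg fun τ hτ => hqnn τ (Finset.mem_Icc.mp hτ).1
      have hApos : 0 < A 2 (t+1) := by
        rw [hA2 (t+1)]
        simp only [Nat.add_sub_cancel]
        apply div_pos
        · nlinarith
        · have := hplt 2 le_rfl hk2; linarith
      have hmin : min (A 2 (t+1)) (B 2 (t+1)) ≤ 0 := by
        rw [← hq2 (t+1) (by omega)]; exact hq0
      have hBle : B 2 (t+1) ≤ 0 := by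
        rcases le_total (A 2 (t+1)) (B 2 (t+1)) with h | h
        · rw [min_eq_left h] at hmin; linarith
        · rwa [min_eq_right h] at hmin
      rw [hB2 (t+1)] at hBle
      simp only [Nat.add_sub_cancel] at hBle
      rw [hρ2]
      exact le_antisymm (hSle t) (by linarith)
    | succ j hj ih =>
      intro hk1
      have hjk : j ≤ k := by omega
      obtain ⟨Pnn, Ple, N', hN'⟩ := ih hjk
      have h3 : 3 ≤ j + 1 := by omega
      have hpjpos : 0 < p (j+1) := hppos _ (by omega) hk1
      have hpjlt : p (j+1) < 1/2 := hplt _ (by omega) hk1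
      have hpj1 : p j < 1/2 := hplt j hj hjk
      have hXpos : 0 < p1m * ∏ i ∈ Finset.Icc 2 j, (1 - p i) :=
        mul_pos hp1m (hprodpos j hjk)
      have hTnn : ∀ t, 0 ≤ ∑ τ ∈ Finset.Icc j t, q j τ :=
        fun t => Finset.sum_nonneg fun τ hτ => Pnn τ (Finset.mem_Icc.mp hτ).1
      have hTmono : ∀ s t : ℕ, s ≤ t →
          (∑ τ ∈ Finset.Icc j s, q j τ) ≤ ∑ τ ∈ Finset.Icc j t, q j τ := by
        intro s t hst
        apply Finset.sum_le_sum_of_subset_of_nonneg (Finset.Icc_subset_Icc_right hst)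
        intro τ hτ _
        exact Pnn τ (Finset.mem_Icc.mp hτ).1
      have hL1 : ∀ t, (∑ τ ∈ Finset.Icc (j+1) t, q (j+1) τ) ≤
          (1 - p j) * ∑ τ ∈ Finset.Icc j (t-1), q j τ := by
        intro t
        rcases Nat.lt_or_ge t (j+1) with h | h
        · rw [Finset.Icc_eq_empty (by omega)]
          simp only [Finset.sum_empty]
          exact mul_nonneg (by linarith) (hTnn _)
        · obtain ⟨s, rfl⟩ : ∃ s, t = s + 1 := ⟨t - 1, by omega⟩
          rw [Finset.sum_Icc_succ_top (by omega : j + 1 ≤ s + 1)]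
          have hqB : q (j+1) (s+1) ≤ B (j+1) (s+1) := by
            rw [hqge (j+1) (s+1) h3 hk1 h]; exact min_le_right _ _
          rw [hBj (j+1) (s+1) h3 hk1] at hqB
          simp only [Nat.add_sub_cancel] at hqB ⊢
          linarith
      have hρs : ρ (j+1) = ρ j * (1 - p j) := hρstep j hj hk1
      have hL2 : ∀ t, (∑ τ ∈ Finset.Icc (j+1) t, q (j+1) τ) ≤ ρ (j+1) := by
        intro t
        have h1 := hL1 t
        have h2' : (1 - p j) * (∑ τ ∈ Finset.Icc j (t-1), q j τ) ≤ (1 - p j) * ρ j :=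
          mul_le_mul_of_nonneg_left (Ple (t-1)) (by linarith)
        rw [hρs]
        linarith [mul_comm (ρ j) (1 - p j)]
      have hqnn : ∀ t, j + 1 ≤ t → 0 ≤ q (j+1) t := by
        intro t
        induction t using Nat.strong_induction_on with
        | _ t ihh =>
          intro ht
          have hSnn : 0 ≤ ∑ τ ∈ Finset.Icc (j+1) (t-1), q (j+1) τ :=
            Finset.sum_nonneg fun τ hτ => by
              obtain ⟨h1, h2'⟩ := Finset.mem_Icc.mp hτ
              exact ihh τ (by omega) h1
          rw [hqge (j+1) t h3 hk1 ht]
          apply le_min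
          · rw [hAj (j+1) t h3 hk1]
            simp only [Nat.add_sub_cancel]
            apply div_nonneg
            · nlinarith
            · linarith
          · rw [hBj (j+1) t h3 hk1]
            simp only [Nat.add_sub_cancel]
            have h1 := hL1 (t-1)
            have h2' : (1 - p j) * (∑ τ ∈ Finset.Icc j (t-1-1), q j τ) ≤
                (1 - p j) * ∑ τ ∈ Finset.Icc j (t-1), q j τ :=
              mul_le_mul_of_nonneg_left (hTmono (t-1-1) (t-1) (by omega)) (by linarith)
            linarith
      refine ⟨hqnn, hL2, ⟨max (max N' (n (j+1))) j, fun t ht => ?_⟩⟩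
      have htN : N' ≤ t := le_trans (le_trans (le_max_left _ _) (le_max_left _ _)) ht
      have htn : n (j+1) ≤ t := le_trans (le_trans (le_max_right _ _) (le_max_left _ _)) ht
      have htj : j ≤ t := le_trans (le_max_right _ _) ht
      have hq0 : q (j+1) (t+1) ≤ 0 := by
        by_contra h
        push_neg at h
        exact absurd (hnmax (j+1) (by omega) hk1 (t+1) h) (by omega)
      have hSnn : 0 ≤ ∑ τ ∈ Finset.Icc (j+1) t, q (j+1) τ :=
        Finset.sum_nonneg fun τ hτ => hqnn τ (Finset.mem_Icc.mp hτ).1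
      have hApos : 0 < A (j+1) (t+1) := by
        rw [hAj (j+1) (t+1) h3 hk1]
        simp only [Nat.add_sub_cancel]
        apply div_pos
        · nlinarith
        · linarith
      have hmin : min (A (j+1) (t+1)) (B (j+1) (t+1)) ≤ 0 := by
        rw [← hqge (j+1) (t+1) h3 hk1 (by omega)]; exact hq0
      have hBle : B (j+1) (t+1) ≤ 0 := by
        rcases le_total (A (j+1) (t+1)) (B (j+1) (t+1)) with h | h
        · rw [min_eq_left h] at hmin; linarith
        · rwa [min_eq_right h] at hmin
      rw [hBj (j+1) (t+1) h3 hk1] at hBle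
      simp only [Nat.add_sub_cancel] at hBle
      rw [hN' t htN] at hBle
      refine le_antisymm (hL2 t) ?_
      rw [hρs]
      linarith [mul_comm (ρ j) (1 - p j)]
  -- conclude
  intro j hj2 hjk
  obtain ⟨hnn, hle, N, hN⟩ := main j hj2 hjk
  have hρp := hρpos j hj2 hjk
  have hq0 : ∀ t, n j < t → j ≤ t → q j t = 0 := by
    intro t h1 h2'
    have hge := hnn t h2'
    have hle' : q j t ≤ 0 := by
      by_contra h
      push_neg at h
      exact absurd (hnmax j hj2 hjk t h) (by omega)
    linarith
  have hjn : j ≤ n j := by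
    by_contra h
    push_neg at h
    have hz : ∑ τ ∈ Finset.Icc j (max N (n j)), q j τ = 0 :=
      Finset.sum_eq_zero fun τ hτ => by
        obtain ⟨ha, hb⟩ := Finset.mem_Icc.mp hτ
        exact hq0 τ (by omega) ha
    have := hN (max N (n j)) (le_max_left _ _)
    rw [hz] at this
    linarith
  have hnM : n j ≤ max N (n j) := le_max_right _ _
  have hsplit : ∑ τ ∈ Finset.Icc j (max N (n j)), q j τ =
      ∑ τ ∈ Finset.Icc j (n j), q j τ + ∑ τ ∈ Finset.Ioc (n j) (max N (n j)), q j τ := by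
    have e : ∀ x, Finset.Icc j x = Finset.Ioc (j-1) x := fun x => by
      ext a
      simp only [Finset.mem_Icc, Finset.mem_Ioc]
      omega
    rw [e, e, ← Finset.sum_Ioc_consecutive _ (by omega : j - 1 ≤ n j) hnM]
  have hIoc0 : ∑ τ ∈ Finset.Ioc (n j) (max N (n j)), q j τ = 0 :=
    Finset.sum_eq_zero fun τ hτ => by
      obtain ⟨ha, hb⟩ := Finset.mem_Ioc.mp hτ
      exact hq0 τ ha (by omega)
  have hfin := hN (max N (n j)) (le_max_left _ _)
  rw [hsplit, hIoc0] at hfin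
  linarith
end

section
/- For every y ∈ (0,1] and every action j with 2 ≤ j ≤ k−1, it holds that f^j(y) < f^{j+1}(y). -/
theorem stmt_8
    (k : ℕ) (hk : 3 ≤ k)
    (p1m p10 : ℝ) (hp1m : 0 < p1m) (hp10 : 0 < p10) (hp1sum : p1m + p10 ≤ 1)
    (p : ℕ → ℝ)
    (hp2 : p 2 < 1/2) (hpk : 0 < p k)
    (hpdec : ∀ j : ℕ, 2 ≤ j → j < k → p (j+1) < p j)
    (A B q : ℕ → ℕ → ℝ)
    (hA2 : ∀ t : ℕ, A 2 t =
      (2 * p1m * p 2 + p 2 * ∑ m ∈ Finset.Icc 2 (t-1), q 2 m) / (1 - 2 * p 2))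
    (hB2 : ∀ t : ℕ, B 2 t = p10 - ∑ m ∈ Finset.Icc 2 (t-1), q 2 m)
    (hAj : ∀ j t : ℕ, 3 ≤ j → j ≤ k →
      A j t = (2 * p j * (p1m * ∏ i ∈ Finset.Icc 2 (j-1), (1 - p i))
        + p j * ∑ τ ∈ Finset.Icc j (t-1), q j τ) / (1 - 2 * p j))
    (hBj : ∀ j t : ℕ, 3 ≤ j → j ≤ k →
      B j t = (1 - p (j-1)) * ∑ τ ∈ Finset.Icc (j-1) (t-1), q (j-1) τ
        - ∑ τ ∈ Finset.Icc j (t-1), q j τ)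
    (hq21 : q 2 1 = 0)
    (hq2 : ∀ t : ℕ, 2 ≤ t → q 2 t = min (A 2 t) (B 2 t))
    (hqlt : ∀ j t : ℕ, 3 ≤ j → j ≤ k → t < j → q j t = 0)
    (hqge : ∀ j t : ℕ, 3 ≤ j → j ≤ k → j ≤ t → q j t = min (A j t) (B j t))
    (n : ℕ → ℕ) (hn1 : n 1 = 1)
    (hnpos : ∀ j : ℕ, 2 ≤ j → j ≤ k → 0 < q j (n j))
    (hnmax : ∀ j : ℕ, 2 ≤ j → j ≤ k → ∀ t : ℕ, 0 < q j t → t ≤ n j)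
    (ρ : ℕ → ℝ)
    (hρ : ∀ j : ℕ, 2 ≤ j → j ≤ k → ρ j = p10 * ∏ i ∈ Finset.Icc 2 (j-1), (1 - p i))
    (f : ℝ → ℕ → ℕ)
    (hf : ∀ y : ℝ, 0 < y → y ≤ 1 → ∀ j : ℕ, 2 ≤ j → j ≤ k →
      (∑ τ ∈ Finset.Icc 1 (f y j - 1), q j τ < y * ρ j) ∧
      (∀ t : ℕ, (∑ τ ∈ Finset.Icc 1 (t-1), q j τ < y * ρ j) → t ≤ f y j)) :
    ∀ y : ℝ, 0 < y → y ≤ 1 → ∀ j : ℕ, 2 ≤ j → j + 1 ≤ k → f y j < f y (j+1) := by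
  intro y hy0 hy1 j hj2 hjk
  have hj3 : 3 ≤ j + 1 := by omega
  -- monotonicity of p
  have hmono : ∀ a b : ℕ, 2 ≤ a → a ≤ b → b ≤ k → p b ≤ p a := by
    intro a b ha hab hbk
    induction b with
    | zero => omega
    | succ m ih =>
      rcases Nat.lt_or_ge a (m+1) with h | h
      · exact le_trans (hpdec m (by omega) (by omega)).le (ih (by omega) (by omega))
      · have : a = m + 1 := by omega
        rw [this]
  have hhalf : ∀ m : ℕ, 2 ≤ m → m ≤ k → p m < 1/2 :=
    fun m h1 h2 => lt_of_le_of_lt (hmono 2 m le_rfl h1 h2) hp2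
  have hρpos : 0 < ρ (j+1) := by
    rw [hρ (j+1) (by omega) hjk]
    refine mul_pos hp10 (Finset.prod_pos ?_)
    intro i hi
    simp only [Finset.mem_Icc] at hi
    have := hhalf i hi.1 (by omega)
    linarith
  have hρrel : ρ (j+1) = (1 - p j) * ρ j := by
    rw [hρ (j+1) (by omega) hjk, hρ j hj2 (by omega)]
    have h1 : (j+1) - 1 = (j-1) + 1 := by omega
    rw [h1, Finset.prod_Icc_succ_top (by omega)]
    have h2 : j - 1 + 1 = j := by omega
    rw [h2]; ring
  obtain ⟨hfj1, -⟩ := hf y hy0 hy1 j hj2 (by omega)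
  obtain ⟨-, hfmax⟩ := hf y hy0 hy1 (j+1) (by omega) hjk
  set T := f y j with hT
  have key : ∑ τ ∈ Finset.Icc 1 T, q (j+1) τ < y * ρ (j+1) := by
    rcases Nat.lt_or_ge T (j+1) with hTj | hTj
    · have hz : ∑ τ ∈ Finset.Icc 1 T, q (j+1) τ = 0 := by
        apply Finset.sum_eq_zero
        intro τ hτ
        simp only [Finset.mem_Icc] at hτ
        exact hqlt (j+1) τ hj3 hjk (by omega)
      rw [hz]
      exact mul_pos hy0 hρpos
    · -- T ≥ j+1
      have hsub1 : ∑ τ ∈ Finset.Icc 1 T, q (j+1) τ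
          = ∑ τ ∈ Finset.Icc (j+1) T, q (j+1) τ := by
        symm
        apply Finset.sum_subset
        · intro x hx
          simp only [Finset.mem_Icc] at hx ⊢
          omega
        · intro x hx hx'
          simp only [Finset.mem_Icc] at hx hx'
          exact hqlt (j+1) x hj3 hjk (by omega)
      have hsub2 : ∑ τ ∈ Finset.Icc j (T-1), q j τ
          = ∑ τ ∈ Finset.Icc 1 (T-1), q j τ := by
        apply Finset.sum_subset
        · intro x hx
          simp only [Finset.mem_Icc] at hx ⊢
          omega
        · intro x hx hx'
          simp only [Finset.mem_Icc] at hx hx'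
          rcases Nat.lt_or_ge j 3 with h3 | h3
          · have hj2' : j = 2 := by omega
            have hx1 : x = 1 := by omega
            rw [hx1, hj2']; exact hq21
          · exact hqlt j x h3 (by omega) (by omega)
      have hqTle : q (j+1) T ≤ B (j+1) T := by
        rw [hqge (j+1) T hj3 hjk (by omega)]
        exact min_le_right _ _
      rw [hBj (j+1) T hj3 hjk] at hqTle
      simp only [Nat.add_sub_cancel] at hqTle
      have hsplit : ∑ τ ∈ Finset.Icc (j+1) T, q (j+1) τ
          = ∑ τ ∈ Finset.Icc (j+1) (T-1), q (j+1) τ + q (j+1) T := by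
        have hT1 : T = (T - 1) + 1 := by omega
        rw [hT1, Finset.sum_Icc_succ_top (by omega)]
        rw [← hT1]
      have hbound : ∑ τ ∈ Finset.Icc 1 T, q (j+1) τ
          ≤ (1 - p j) * ∑ τ ∈ Finset.Icc 1 (T-1), q j τ := by
        rw [hsub1, hsplit, ← hsub2]
        linarith
      have hp_j : p j < 1/2 := hhalf j hj2 (by omega)
      calc ∑ τ ∈ Finset.Icc 1 T, q (j+1) τ
          ≤ (1 - p j) * ∑ τ ∈ Finset.Icc 1 (T-1), q j τ := hbound
        _ < (1 - p j) * (y * ρ j) := by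
            apply mul_lt_mul_of_pos_left hfj1
            linarith
        _ = y * ρ (j+1) := by rw [hρrel]; ring
  have := hfmax (T + 1) (by simpa using key)
  omega
end

section
/- For every action j with 2 ≤ j ≤ k−1, it holds that n_j + 1 ≤ n_{j+1}. -/
theorem stmt_9
    (k : ℕ) (hk : 3 ≤ k)
    (p1m p10 : ℝ) (hp1m : 0 < p1m) (hp10 : 0 < p10) (hp1sum : p1m + p10 ≤ 1)
    (p : ℕ → ℝ)
    (hp2 : p 2 < 1/2) (hpk : 0 < p k)
    (hpdec : ∀ j : ℕ, 2 ≤ j → j < k → p (j+1) < p j)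
    (A B q : ℕ → ℕ → ℝ)
    (hA2 : ∀ t : ℕ, A 2 t =
      (2 * p1m * p 2 + p 2 * ∑ m ∈ Finset.Icc 2 (t-1), q 2 m) / (1 - 2 * p 2))
    (hB2 : ∀ t : ℕ, B 2 t = p10 - ∑ m ∈ Finset.Icc 2 (t-1), q 2 m)
    (hAj : ∀ j t : ℕ, 3 ≤ j → j ≤ k →
      A j t = (2 * p j * (p1m * ∏ i ∈ Finset.Icc 2 (j-1), (1 - p i))
        + p j * ∑ τ ∈ Finset.Icc j (t-1), q j τ) / (1 - 2 * p j))
    (hBj : ∀ j t : ℕ, 3 ≤ j → j ≤ k →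
      B j t = (1 - p (j-1)) * ∑ τ ∈ Finset.Icc (j-1) (t-1), q (j-1) τ
        - ∑ τ ∈ Finset.Icc j (t-1), q j τ)
    (hq21 : q 2 1 = 0)
    (hq2 : ∀ t : ℕ, 2 ≤ t → q 2 t = min (A 2 t) (B 2 t))
    (hqlt : ∀ j t : ℕ, 3 ≤ j → j ≤ k → t < j → q j t = 0)
    (hqge : ∀ j t : ℕ, 3 ≤ j → j ≤ k → j ≤ t → q j t = min (A j t) (B j t))
    (n : ℕ → ℕ) (hn1 : n 1 = 1)
    (hnpos : ∀ j : ℕ, 2 ≤ j → j ≤ k → 0 < q j (n j))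
    (hnmax : ∀ j : ℕ, 2 ≤ j → j ≤ k → ∀ t : ℕ, 0 < q j t → t ≤ n j)
    (ρ : ℕ → ℝ)
    (hρ : ∀ j : ℕ, 2 ≤ j → j ≤ k → ρ j = p10 * ∏ i ∈ Finset.Icc 2 (j-1), (1 - p i))
    (f : ℝ → ℕ → ℕ)
    (hf : ∀ y : ℝ, 0 < y → y ≤ 1 → ∀ j : ℕ, 2 ≤ j → j ≤ k →
      (∑ τ ∈ Finset.Icc 1 (f y j - 1), q j τ < y * ρ j) ∧
      (∀ t : ℕ, (∑ τ ∈ Finset.Icc 1 (t-1), q j τ < y * ρ j) → t ≤ f y j)) :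
    ∀ j : ℕ, 2 ≤ j → j + 1 ≤ k → n j + 1 ≤ n (j+1) := by

  -- positivity and bounds on p i for 2 ≤ i ≤ k
  have hppos : ∀ i, 2 ≤ i → i ≤ k → 0 < p i := by
    have H : ∀ d i, 2 ≤ i → i + d = k → 0 < p i := by
      intro d
      induction d with
      | zero =>
        intro i h2 h
        have : i = k := by omega
        subst this; exact hpk
      | succ d ih =>
        intro i h2 h
        have h1 : 0 < p (i+1) := ih (i+1) (by omega) (by omega)
        have h2' : p (i+1) < p i := hpdec i h2 (by omega)
        linarith
    intro i h2 hik
    exact H (k - i) i h2 (by omega)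
  have hphalf : ∀ i, 2 ≤ i → i ≤ k → p i < 1/2 := by
    have H : ∀ i, 2 ≤ i → i ≤ k → p i ≤ p 2 := by
      intro i
      induction i with
      | zero => intro h; omega
      | succ m ih =>
        intro h2 hik
        rcases Nat.lt_or_ge m 2 with hm | hm
        · have : m + 1 = 2 := by omega
          rw [this]
        · have h1 := ih (by omega) (by omega)
          have h2' := hpdec m hm (by omega)
          linarith
    intro i h2 hik
    have := H i h2 hik
    linarith
  have hprod : ∀ j, 2 ≤ j → j ≤ k →
      0 < p1m * ∏ i ∈ Finset.Icc 2 (j-1), (1 - p i) := by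
    intro j h2 hjk
    refine mul_pos hp1m (Finset.prod_pos ?_)
    intro i hi
    rw [Finset.mem_Icc] at hi
    have := hphalf i hi.1 (by omega)
    linarith
  -- uniform formula for A
  have hA : ∀ j t, 2 ≤ j → j ≤ k →
      A j t = (2 * p j * (p1m * ∏ i ∈ Finset.Icc 2 (j-1), (1 - p i))
        + p j * ∑ τ ∈ Finset.Icc j (t-1), q j τ) / (1 - 2 * p j) := by
    intro j t h2 hjk
    rcases eq_or_lt_of_le h2 with rfl | h
    · rw [hA2 t, show Finset.Icc 2 (2-1) = (∅ : Finset ℕ) from Finset.Icc_eq_empty (by omega)]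
      rw [Finset.prod_empty]
      ring_nf
    · exact hAj j t (by omega) hjk
  -- telescoping sums
  have hsum : ∀ (g : ℕ → ℝ) (a s : ℕ), 1 ≤ a → a ≤ s →
      ∑ τ ∈ Finset.Icc a s, g τ = (∑ τ ∈ Finset.Icc a (s-1), g τ) + g s := by
    intro g a s ha has
    obtain ⟨m, rfl⟩ : ∃ m, s = m + 1 := ⟨s - 1, by omega⟩
    rw [Finset.sum_Icc_succ_top (by omega), Nat.add_sub_cancel]
  -- q as a min, uniformly
  have hqmin : ∀ j s, 2 ≤ j → j ≤ k → j ≤ s → q j s = min (A j s) (B j s) := by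
    intro j s h2 hjk hjs
    rcases eq_or_lt_of_le h2 with rfl | h
    · exact hq2 s hjs
    · exact hqge j s (by omega) hjk hjs
  -- A recursion
  have hAstep : ∀ j s, 2 ≤ j → j ≤ k → j ≤ s →
      A j (s+1) = A j s + (p j / (1 - 2 * p j)) * q j s := by
    intro j s h2 hjk hjs
    rw [hA j (s+1) h2 hjk, hA j s h2 hjk]
    simp only [Nat.add_sub_cancel]
    rw [hsum (q j) j s (by omega) hjs]
    have hd : (0:ℝ) < 1 - 2 * p j := by have := hphalf j h2 hjk; linarith
    field_simp
    ring
  -- B recursion for j ≥ 3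
  have hBstep3 : ∀ j s, 3 ≤ j → j ≤ k → j ≤ s →
      B j (s+1) = B j s + (1 - p (j-1)) * q (j-1) s - q j s := by
    intro j s h3 hjk hjs
    rw [hBj j (s+1) h3 hjk, hBj j s h3 hjk]
    simp only [Nat.add_sub_cancel]
    rw [hsum (q (j-1)) (j-1) s (by omega) (by omega), hsum (q j) j s (by omega) hjs]
    ring
  -- B recursion for j = 2
  have hBstep2 : ∀ s, 2 ≤ s → B 2 (s+1) = B 2 s - q 2 s := by
    intro s hs
    rw [hB2 (s+1), hB2 s]
    simp only [Nat.add_sub_cancel]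
    rw [hsum (q 2) 2 s (by omega) hs]
    ring
  -- B decreases by at least q once the previous level is exhausted
  have hBle : ∀ j s, 2 ≤ j → j ≤ k → j ≤ s → n (j-1) < s →
      B j (s+1) ≤ B j s - q j s := by
    intro j s h2 hjk hjs hns
    rcases eq_or_lt_of_le h2 with rfl | h
    · rw [hBstep2 s hjs]
    · have h3 : 3 ≤ j := by omega
      rw [hBstep3 j s h3 hjk hjs]
      have hq' : q (j-1) s ≤ 0 := by
        by_contra hc
        push_neg at hc
        have := hnmax (j-1) (by omega) (by omega) s hc
        omega
      have hpj : 0 < 1 - p (j-1) := by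
        have := hphalf (j-1) (by omega) (by omega); linarith
      nlinarith
  -- A is positive as long as previous q's at the same level are nonnegative
  have hApos : ∀ j t, 2 ≤ j → j ≤ k →
      (∀ τ, j ≤ τ → τ ≤ t - 1 → 0 ≤ q j τ) → 0 < A j t := by
    intro j t h2 hjk hq
    rw [hA j t h2 hjk]
    have hpj := hppos j h2 hjk
    have hP := hprod j h2 hjk
    have hS : 0 ≤ ∑ τ ∈ Finset.Icc j (t-1), q j τ :=
      Finset.sum_nonneg (fun τ hτ => hq τ (Finset.mem_Icc.mp hτ).1 (Finset.mem_Icc.mp hτ).2)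
    have hd : (0:ℝ) < 1 - 2 * p j := by have := hphalf j h2 hjk; linarith
    apply div_pos ?_ hd
    nlinarith [mul_pos hpj hP, mul_nonneg hpj.le hS]
  -- once q j is nonpositive (past the previous level's horizon), it stays nonpositive
  have forever : ∀ j, 2 ≤ j → j ≤ k → ∀ t, j ≤ t → n (j-1) < t → q j t ≤ 0 →
      ∀ s, t ≤ s → q j s ≤ 0 := by
    intro j h2 hjk t hjt hnt hqt
    have hd : (0:ℝ) < 1 - 2 * p j := by have := hphalf j h2 hjk; linarith
    have hc : 0 ≤ p j / (1 - 2 * p j) := div_nonneg (hppos j h2 hjk).le hd.le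
    have inv : ∀ s, t ≤ s → q j s ≤ 0 ∧ (A j s ≤ 0 ∨ B j (s+1) ≤ 0) := by
      intro s
      induction s with
      | zero => intro h; exact absurd h (by omega)
      | succ m ih =>
        intro hts
        rcases Nat.lt_or_ge m t with hmt | hmt
        · -- base: t = m + 1
          have hteq : t = m + 1 := by omega
          subst hteq
          refine ⟨hqt, ?_⟩
          rcases le_or_gt (A j (m+1)) 0 with hA0 | hA0
          · exact Or.inl hA0
          · have hm := hqmin j (m+1) h2 hjk hjt
            rcases min_cases (A j (m+1)) (B j (m+1)) with ⟨he, _⟩ | ⟨he, _⟩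
            · have h' : A j (m+1) ≤ 0 := by
                have := hqt; rw [hm, he] at this; exact this
              linarith
            · have hBeq : q j (m+1) = B j (m+1) := by rw [hm, he]
              have := hBle j (m+1) h2 hjk hjt hnt
              exact Or.inr (by linarith)
        · -- step: t ≤ m
          obtain ⟨hqm, hAB⟩ := ih hmt
          have hjm : j ≤ m := le_trans hjt hmt
          rcases hAB with hA0 | hB0
          · have hA1 : A j (m+1) ≤ 0 := by
              rw [hAstep j m h2 hjk hjm]
              nlinarith
            have hq1 : q j (m+1) ≤ 0 := by
              rw [hqmin j (m+1) h2 hjk (by omega)]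
              exact le_trans (min_le_left _ _) hA1
            exact ⟨hq1, Or.inl hA1⟩
          · have hq1 : q j (m+1) ≤ 0 := by
              rw [hqmin j (m+1) h2 hjk (by omega)]
              exact le_trans (min_le_right _ _) hB0
            refine ⟨hq1, ?_⟩
            rcases le_or_gt (A j (m+1)) 0 with hA0 | hA0
            · exact Or.inl hA0
            · have hm' := hqmin j (m+1) h2 hjk (by omega)
              rcases min_cases (A j (m+1)) (B j (m+1)) with ⟨he, _⟩ | ⟨he, _⟩
              · have h' : A j (m+1) ≤ 0 := by
                  have := hq1; rw [hm', he] at this; exact this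
                linarith
              · have hBeq : q j (m+1) = B j (m+1) := by rw [hm', he]
                have := hBle j (m+1) h2 hjk (by omega) (by omega)
                exact Or.inr (by linarith)
    intro s hs
    exact (inv s hs).1
  -- main induction on j
  have key : ∀ j, 2 ≤ j → j ≤ k →
      (3 ≤ j → n (j-1) + 1 ≤ n j) ∧ j ≤ n j ∧ (∀ t, j ≤ t → t ≤ n j → 0 < q j t) := by
    intro j h2
    induction j, h2 using Nat.le_induction with
    | base =>
      intro hk2
      have hA22 : 0 < A 2 2 := by
        apply hApos 2 2 le_rfl hk2
        intro τ h1 h2'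
        exact absurd (h1.trans h2') (by omega)
      have hB22 : 0 < B 2 2 := by
        rw [hB2 2, show Finset.Icc 2 (2-1) = (∅ : Finset ℕ) from Finset.Icc_eq_empty (by omega)]
        simpa using hp10
      have q22 : 0 < q 2 2 := by
        rw [hqmin 2 2 le_rfl hk2 le_rfl]
        exact lt_min hA22 hB22
      have h2n : 2 ≤ n 2 := hnmax 2 le_rfl hk2 2 q22
      refine ⟨by omega, h2n, ?_⟩
      intro t ht1 ht2
      by_contra hle
      push_neg at hle
      have := forever 2 le_rfl hk2 t ht1 (by norm_num [hn1]; omega) hle (n 2) ht2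
      linarith [hnpos 2 le_rfl hk2]
    | succ j hj ih =>
      intro hk'
      obtain ⟨_, hjn, hcontig⟩ := ih (by omega)
      have h3 : 3 ≤ j + 1 := by omega
      have direct : ∀ t, j + 1 ≤ t → t ≤ n j + 1 → 0 < q (j+1) t := by
        intro t
        induction t using Nat.strong_induction_on with
        | _ t IH =>
          intro ht1 ht2
          have hAt : 0 < A (j+1) t :=
            hApos (j+1) t (by omega) hk' (fun τ hτ1 hτ2 => (IH τ (by omega) hτ1 (by omega)).le)
          have hBt : 0 < B (j+1) t := by
            rcases eq_or_lt_of_le ht1 with h | h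
            · subst h
              rw [hBj (j+1) (j+1) h3 hk']
              simp only [Nat.add_sub_cancel]
              rw [Finset.Icc_self, Finset.sum_singleton,
                show Finset.Icc (j+1) j = (∅ : Finset ℕ) from Finset.Icc_eq_empty (by omega)]
              simp only [Finset.sum_empty]
              have hqjj := hcontig j le_rfl hjn
              have hpj := hphalf j hj (by omega)
              nlinarith
            · obtain ⟨s, rfl⟩ : ∃ s, t = s + 1 := ⟨t - 1, by omega⟩
              have hs1 : j + 1 ≤ s := by omega
              rw [hBstep3 (j+1) s h3 hk' hs1]
              simp only [Nat.add_sub_cancel]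
              have hqjs : 0 < q j s := hcontig s (by omega) (by omega)
              have hqB : q (j+1) s ≤ B (j+1) s := by
                rw [hqmin (j+1) s (by omega) hk' hs1]
                exact min_le_right _ _
              have hpj := hphalf j hj (by omega)
              nlinarith [mul_pos (show (0:ℝ) < 1 - p j by linarith) hqjs]
          rw [hqmin (j+1) t (by omega) hk' ht1]
          exact lt_min hAt hBt
      have hstep : n j + 1 ≤ n (j+1) :=
        hnmax (j+1) (by omega) hk' _ (direct (n j + 1) (by omega) le_rfl)
      refine ⟨fun _ => by simpa using hstep, by omega, ?_⟩
      intro t ht1 ht2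
      rcases le_or_gt t (n j + 1) with hb | hb
      · exact direct t ht1 hb
      · by_contra hle
        push_neg at hle
        have := forever (j+1) (by omega) hk' t ht1
          (by simp only [Nat.add_sub_cancel]; omega) hle (n (j+1)) ht2
        linarith [hnpos (j+1) (by omega) hk']
  intro j hj2 hjk1
  have h := (key (j+1) (by omega) hjk1).1 (by omega)
  simpa using h
end

section
/- For every y ∈ (0,1]: (i) for every pair of distinct actions i ≠ j with 2 ≤ i, j ≤ k, f^i(y) ≠ f^j(y); and (ii) for every action j with 2 ≤ j ≤ k, f^j(y) is well defined and satisfies 1 ≤ f^j(y) ≤ n_j. -/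
theorem stmt_10
    (k : ℕ) (hk : 3 ≤ k)
    (p1m p10 : ℝ) (hp1m : 0 < p1m) (hp10 : 0 < p10) (hp1sum : p1m + p10 ≤ 1)
    (p : ℕ → ℝ)
    (hp2 : p 2 < 1/2) (hpk : 0 < p k)
    (hpdec : ∀ j : ℕ, 2 ≤ j → j < k → p (j+1) < p j)
    (A B q : ℕ → ℕ → ℝ)
    (hA2 : ∀ t : ℕ, A 2 t =
      (2 * p1m * p 2 + p 2 * ∑ m ∈ Finset.Icc 2 (t-1), q 2 m) / (1 - 2 * p 2))
    (hB2 : ∀ t : ℕ, B 2 t = p10 - ∑ m ∈ Finset.Icc 2 (t-1), q 2 m)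
    (hAj : ∀ j t : ℕ, 3 ≤ j → j ≤ k →
      A j t = (2 * p j * (p1m * ∏ i ∈ Finset.Icc 2 (j-1), (1 - p i))
        + p j * ∑ τ ∈ Finset.Icc j (t-1), q j τ) / (1 - 2 * p j))
    (hBj : ∀ j t : ℕ, 3 ≤ j → j ≤ k →
      B j t = (1 - p (j-1)) * ∑ τ ∈ Finset.Icc (j-1) (t-1), q (j-1) τ
        - ∑ τ ∈ Finset.Icc j (t-1), q j τ)
    (hq21 : q 2 1 = 0)
    (hq2 : ∀ t : ℕ, 2 ≤ t → q 2 t = min (A 2 t) (B 2 t))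
    (hqlt : ∀ j t : ℕ, 3 ≤ j → j ≤ k → t < j → q j t = 0)
    (hqge : ∀ j t : ℕ, 3 ≤ j → j ≤ k → j ≤ t → q j t = min (A j t) (B j t))
    (n : ℕ → ℕ) (hn1 : n 1 = 1)
    (hnpos : ∀ j : ℕ, 2 ≤ j → j ≤ k → 0 < q j (n j))
    (hnmax : ∀ j : ℕ, 2 ≤ j → j ≤ k → ∀ t : ℕ, 0 < q j t → t ≤ n j)
    (ρ : ℕ → ℝ)
    (hρ : ∀ j : ℕ, 2 ≤ j → j ≤ k → ρ j = p10 * ∏ i ∈ Finset.Icc 2 (j-1), (1 - p i))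
    (f : ℝ → ℕ → ℕ)
    (hf : ∀ y : ℝ, 0 < y → y ≤ 1 → ∀ j : ℕ, 2 ≤ j → j ≤ k →
      (∑ τ ∈ Finset.Icc 1 (f y j - 1), q j τ < y * ρ j) ∧
      (∀ t : ℕ, (∑ τ ∈ Finset.Icc 1 (t-1), q j τ < y * ρ j) → t ≤ f y j)) :
    ∀ y : ℝ, 0 < y → y ≤ 1 →
      (∀ i j : ℕ, 2 ≤ i → i ≤ k → 2 ≤ j → j ≤ k → i ≠ j → f y i ≠ f y j) ∧
      (∀ j : ℕ, 2 ≤ j → j ≤ k → 1 ≤ f y j ∧ f y j ≤ n j) := by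
  have hk2 : 2 ≤ k := by omega
  -- monotonicity and bounds for p
  have pmono : ∀ a b : ℕ, 2 ≤ a → a ≤ b → b ≤ k → p b ≤ p a := by
    intro a b ha hab hbk
    induction b with
    | zero => omega
    | succ c ih =>
      rcases Nat.eq_or_lt_of_le hab with h | h
      · exact le_of_eq (congrArg p h.symm)
      · have h2 := hpdec c (by omega) (by omega)
        have h3 := ih (by omega) (by omega)
        linarith
  have ppos : ∀ j, 2 ≤ j → j ≤ k → 0 < p j := fun j h2 hjk =>
    lt_of_lt_of_le hpk (pmono j k h2 hjk le_rfl)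
  have phalf : ∀ j, 2 ≤ j → j ≤ k → p j < 1/2 := fun j h2 hjk =>
    lt_of_le_of_lt (pmono 2 j le_rfl h2 hjk) hp2
  have pone : ∀ j, 2 ≤ j → j ≤ k → 0 < 1 - p j := by
    intro j h2 hjk; have := phalf j h2 hjk; linarith
  set S : ℕ → ℕ → ℝ := fun j t => ∑ τ ∈ Finset.Icc 1 t, q j τ with hSdef
  have qsmall : ∀ j, 2 ≤ j → j ≤ k → ∀ τ, 1 ≤ τ → τ < j → q j τ = 0 := by
    intro j hj hjk τ hτ1 hτj
    by_cases h : j = 2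
    · subst h; have : τ = 1 := by omega
      rw [this]; exact hq21
    · exact hqlt j τ (by omega) hjk hτj
  have Ssmall : ∀ j, 2 ≤ j → j ≤ k → ∀ s, s < j → S j s = 0 := by
    intro j hj hjk s hs
    apply Finset.sum_eq_zero
    intro τ hτ
    simp only [Finset.mem_Icc] at hτ
    exact qsmall j hj hjk τ hτ.1 (by omega)
  have htail : ∀ j, 2 ≤ j → j ≤ k → ∀ t, (∑ τ ∈ Finset.Icc j t, q j τ) = S j t := by
    intro j hj hjk t
    refine Finset.sum_subset ?_ ?_
    · intro x hx
      simp only [Finset.mem_Icc] at hx ⊢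
      omega
    · intro x hx hnx
      simp only [Finset.mem_Icc] at hx hnx
      exact qsmall j hj hjk x hx.1 (by omega)
  have hB2' : ∀ t, B 2 t = p10 - S 2 (t-1) := by
    intro t; rw [hB2 t, htail 2 le_rfl hk2 (t-1)]
  have hBj' : ∀ j t, 3 ≤ j → j ≤ k →
      B j t = (1 - p (j-1)) * S (j-1) (t-1) - S j (t-1) := by
    intro j t h3 hjk
    rw [hBj j t h3 hjk, htail j (by omega) hjk (t-1),
      htail (j-1) (by omega) (by omega) (t-1)]
  have hA2' : ∀ t, A 2 t = (2*p1m*p 2 + p 2 * S 2 (t-1))/(1-2*p 2) := by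
    intro t; rw [hA2 t, htail 2 le_rfl hk2 (t-1)]
  have hAj' : ∀ j t, 3 ≤ j → j ≤ k →
      A j t = (2 * p j * (p1m * ∏ i ∈ Finset.Icc 2 (j-1), (1 - p i))
        + p j * S j (t-1))/(1-2*p j) := by
    intro j t h3 hjk; rw [hAj j t h3 hjk, htail j (by omega) hjk (t-1)]
  have Sstep : ∀ (j s : ℕ), 1 ≤ s → S j s = S j (s-1) + q j s := by
    intro j s hs
    obtain ⟨r, rfl⟩ : ∃ r, s = r + 1 := ⟨s-1, by omega⟩
    simp only [Nat.add_sub_cancel, hSdef]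
    exact Finset.sum_Icc_succ_top (by omega) _
  -- main nonnegativity induction
  have main : ∀ t : ℕ, ∀ j, 2 ≤ j → j ≤ k → 0 ≤ B j t ∧ (1 ≤ t → 0 ≤ q j t) := by
    intro t
    induction t using Nat.strong_induction_on with
    | _ t IH =>
      intro j hj2 hjk
      have qnn' : ∀ j', 2 ≤ j' → j' ≤ k → ∀ s, 1 ≤ s → s < t → 0 ≤ q j' s :=
        fun j' h1 h2 s hs1 hst => (IH s hst j' h1 h2).2 hs1
      have Snn' : ∀ j', 2 ≤ j' → j' ≤ k → ∀ s, s < t → 0 ≤ S j' s := by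
        intro j' h1 h2 s hst
        apply Finset.sum_nonneg
        intro τ hτ
        simp only [Finset.mem_Icc] at hτ
        exact qnn' j' h1 h2 τ hτ.1 (by omega)
      have hBnn : 0 ≤ B j t := by
        rcases lt_or_ge t 3 with ht | ht
        · by_cases h2 : j = 2
          · subst h2
            rw [hB2', Ssmall 2 le_rfl hk2 (t-1) (by omega)]
            linarith
          · have h3 : 3 ≤ j := by omega
            rw [hBj' j t h3 hjk,
              Ssmall j (by omega) hjk (t-1) (by omega),
              Ssmall (j-1) (by omega) (by omega) (t-1) (by omega)]
            norm_num
        · obtain ⟨s, rfl⟩ : ∃ s, t = s + 1 := ⟨t-1, by omega⟩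
          have hs2 : 2 ≤ s := by omega
          have hBs : 0 ≤ B j s := (IH s (by omega) j hj2 hjk).1
          have hqB : q j s ≤ B j s := by
            by_cases h2 : j = 2
            · subst h2; rw [hq2 s hs2]; exact min_le_right _ _
            · have h3 : 3 ≤ j := by omega
              rcases le_or_gt j s with h | h
              · rw [hqge j s h3 hjk h]; exact min_le_right _ _
              · rw [hqlt j s h3 hjk h]; exact hBs
          by_cases h2 : j = 2
          · subst h2
            rw [hB2']
            simp only [Nat.add_sub_cancel]
            rw [Sstep 2 s (by omega)]
            have hBse : B 2 s = p10 - S 2 (s-1) := hB2' s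
            linarith
          · have h3 : 3 ≤ j := by omega
            rw [hBj' j (s+1) h3 hjk]
            simp only [Nat.add_sub_cancel]
            rw [Sstep j s (by omega), Sstep (j-1) s (by omega)]
            have hBse : B j s = (1 - p (j-1)) * S (j-1) (s-1) - S j (s-1) := hBj' j s h3 hjk
            have hq' : 0 ≤ q (j-1) s := qnn' (j-1) (by omega) (by omega) s (by omega) (by omega)
            have h1p : 0 < 1 - p (j-1) := pone (j-1) (by omega) (by omega)
            nlinarith [mul_nonneg h1p.le hq']
      refine ⟨hBnn, fun ht1 => ?_⟩
      by_cases h2 : j = 2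
      · subst h2
        rcases lt_or_ge t 2 with h | h
        · have : t = 1 := by omega
          rw [this, hq21]
        · rw [hq2 t h]
          have hA : 0 ≤ A 2 t := by
            rw [hA2']
            have hS : 0 ≤ S 2 (t-1) := Snn' 2 le_rfl hk2 (t-1) (by omega)
            have h2p := phalf 2 le_rfl hk2
            have h2pos := ppos 2 le_rfl hk2
            apply div_nonneg
            · nlinarith
            · linarith
          exact le_min hA hBnn
      · have h3 : 3 ≤ j := by omega
        rcases lt_or_ge t j with h | h
        · rw [hqlt j t h3 hjk h]
        · rw [hqge j t h3 hjk h]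
          have hA : 0 ≤ A j t := by
            rw [hAj' j t h3 hjk]
            have hS : 0 ≤ S j (t-1) := Snn' j (by omega) hjk (t-1) (by omega)
            have hjp := phalf j (by omega) hjk
            have hjpos := ppos j (by omega) hjk
            have hprod : 0 < ∏ i ∈ Finset.Icc 2 (j-1), (1 - p i) := by
              apply Finset.prod_pos
              intro i hi
              simp only [Finset.mem_Icc] at hi
              exact pone i hi.1 (by omega)
            apply div_nonneg
            · nlinarith [mul_pos hp1m hprod]
            · linarith
          exact le_min hA hBnn
  have qnn : ∀ j, 2 ≤ j → j ≤ k → ∀ t, 1 ≤ t → 0 ≤ q j t :=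
    fun j h1 h2 t ht => (main t j h1 h2).2 ht
  have Bnn : ∀ j, 2 ≤ j → j ≤ k → ∀ t, 0 ≤ B j t := fun j h1 h2 t => (main t j h1 h2).1
  have Snn : ∀ j, 2 ≤ j → j ≤ k → ∀ t, 0 ≤ S j t := by
    intro j h1 h2 t
    apply Finset.sum_nonneg
    intro τ hτ
    simp only [Finset.mem_Icc] at hτ
    exact qnn j h1 h2 τ hτ.1
  have Smono : ∀ j, 2 ≤ j → j ≤ k → ∀ a b : ℕ, a ≤ b → S j a ≤ S j b := by
    intro j h1 h2 a b hab
    apply Finset.sum_le_sum_of_subset_of_nonneg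
    · intro x hx
      simp only [Finset.mem_Icc] at hx ⊢
      omega
    · intro τ hτ _
      simp only [Finset.mem_Icc] at hτ
      exact qnn j h1 h2 τ hτ.1
  have qleB : ∀ j, 2 ≤ j → j ≤ k → ∀ t, 1 ≤ t → q j t ≤ B j t := by
    intro j h1 h2 t ht
    by_cases hj : j = 2
    · subst hj
      rcases lt_or_ge t 2 with h | h
      · have : t = 1 := by omega
        rw [this, hq21]; exact Bnn 2 le_rfl hk2 1
      · rw [hq2 t h]; exact min_le_right _ _
    · have h3 : 3 ≤ j := by omega
      rcases le_or_gt j t with h | h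
      · rw [hqge j t h3 h2 h]; exact min_le_right _ _
      · rw [hqlt j t h3 h2 h]; exact Bnn j h1 h2 t
  have Scross : ∀ j, 3 ≤ j → j ≤ k → ∀ t, S j t ≤ (1 - p (j-1)) * S (j-1) (t-1) := by
    intro j h3 hjk t
    rcases Nat.eq_zero_or_pos t with rfl | ht
    · rw [Ssmall j (by omega) hjk 0 (by omega)]
      exact mul_nonneg (pone (j-1) (by omega) (by omega)).le (Snn (j-1) (by omega) (by omega) _)
    · have h1 := qleB j (by omega) hjk t ht
      have h2 := hBj' j t h3 hjk
      have h4 := Sstep j t ht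
      linarith
  have qafter : ∀ j, 2 ≤ j → j ≤ k → ∀ t, n j < t → q j t = 0 := by
    intro j h1 h2 t hnt
    have h0 : 0 ≤ q j t := qnn j h1 h2 t (by omega)
    rcases eq_or_lt_of_le h0 with h | h
    · exact h.symm
    · exact absurd (hnmax j h1 h2 t h) (by omega)
  have Sstable : ∀ j, 2 ≤ j → j ≤ k → ∀ t, n j ≤ t → S j t = S j (n j) := by
    intro j h1 h2 t ht
    symm
    apply Finset.sum_subset
    · intro x hx
      simp only [Finset.mem_Icc] at hx ⊢
      omega
    · intro x hx hnx
      simp only [Finset.mem_Icc] at hx hnx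
      exact qafter j h1 h2 x (by omega)
  have Apos : ∀ j, 2 ≤ j → j ≤ k → ∀ t, 0 < A j t := by
    intro j h1 h2 t
    have hS : 0 ≤ S j (t-1) := Snn j h1 h2 (t-1)
    have hjp := phalf j h1 h2
    have hjpos := ppos j h1 h2
    by_cases hj : j = 2
    · subst hj
      rw [hA2']
      apply div_pos
      · nlinarith
      · linarith
    · have h3 : 3 ≤ j := by omega
      rw [hAj' j t h3 h2]
      have hprod : 0 < ∏ i ∈ Finset.Icc 2 (j-1), (1 - p i) := by
        apply Finset.prod_pos
        intro i hi
        simp only [Finset.mem_Icc] at hi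
        exact pone i hi.1 (by omega)
      apply div_pos
      · nlinarith [mul_pos hp1m hprod]
      · linarith
  have Stot : ∀ j, 2 ≤ j → j ≤ k → S j (n j) = ρ j := by
    intro j hj2
    induction j, hj2 using Nat.le_induction with
    | base =>
      intro _
      set t := max (n 2) 1 + 1 with htdef
      have hm1 := Nat.le_max_left (n 2) 1
      have hm2 := Nat.le_max_right (n 2) 1
      have ht2 : 2 ≤ t := by omega
      have hq0 : q 2 t = 0 := qafter 2 le_rfl hk2 t (by omega)
      have hmin : min (A 2 t) (B 2 t) = 0 := by rw [← hq2 t ht2]; exact hq0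
      have hApos := Apos 2 le_rfl hk2 t
      have hBnn' := Bnn 2 le_rfl hk2 t
      have hBt : B 2 t = 0 := by
        rcases le_total (A 2 t) (B 2 t) with h | h
        · rw [min_eq_left h] at hmin; linarith
        · rw [min_eq_right h] at hmin; linarith
      rw [hB2' t] at hBt
      have hst : S 2 (t-1) = S 2 (n 2) := Sstable 2 le_rfl hk2 (t-1) (by omega)
      have hρ2 : ρ 2 = p10 := by
        rw [hρ 2 le_rfl hk2]
        have : Finset.Icc 2 (2-1) = (∅ : Finset ℕ) := by
          apply Finset.Icc_eq_empty; omega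
        rw [this, Finset.prod_empty, mul_one]
      rw [hst] at hBt
      rw [hρ2]
      linarith
    | succ j hj ih =>
      intro hjk
      have h3 : 3 ≤ j + 1 := by omega
      have hjk' : j ≤ k := by omega
      have hIH := ih hjk'
      set t := max (max (n j) (n (j+1))) (j+1) + 1 with htdef
      have h1 := Nat.le_max_left (n j) (n (j+1))
      have h2' := Nat.le_max_right (n j) (n (j+1))
      have h3' := Nat.le_max_left (max (n j) (n (j+1))) (j+1)
      have h4' := Nat.le_max_right (max (n j) (n (j+1))) (j+1)
      have hjt : j + 1 ≤ t := by omega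
      have hq0 : q (j+1) t = 0 := qafter (j+1) (by omega) hjk t (by omega)
      have hmin : min (A (j+1) t) (B (j+1) t) = 0 := by
        rw [← hqge (j+1) t h3 hjk hjt]; exact hq0
      have hApos := Apos (j+1) (by omega) hjk t
      have hBnn' := Bnn (j+1) (by omega) hjk t
      have hBt : B (j+1) t = 0 := by
        rcases le_total (A (j+1) t) (B (j+1) t) with h | h
        · rw [min_eq_left h] at hmin; linarith
        · rw [min_eq_right h] at hmin; linarith
      rw [hBj' (j+1) t h3 hjk] at hBt
      simp only [Nat.add_sub_cancel] at hBt
      have e1 : S j (t-1) = S j (n j) := Sstable j (by omega) hjk' (t-1) (by omega)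
      have e2 : S (j+1) (t-1) = S (j+1) (n (j+1)) := Sstable (j+1) (by omega) hjk (t-1) (by omega)
      have hρs : ρ (j+1) = (1 - p j) * ρ j := by
        rw [hρ (j+1) (by omega) hjk, hρ j (by omega) hjk']
        obtain ⟨b, rfl⟩ : ∃ b, j = b + 1 := ⟨j-1, by omega⟩
        simp only [Nat.add_sub_cancel]
        rw [Finset.prod_Icc_succ_top (by omega : 2 ≤ b + 1)]
        ring
      rw [e1, e2, hIH] at hBt
      rw [hρs]
      linarith
  have ρpos : ∀ j, 2 ≤ j → j ≤ k → 0 < ρ j := by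
    intro j h1 h2
    rw [hρ j h1 h2]
    apply mul_pos hp10
    apply Finset.prod_pos
    intro i hi
    simp only [Finset.mem_Icc] at hi
    exact pone i hi.1 (by omega)
  have chainS : ∀ j, 3 ≤ j → j ≤ k → ∀ i, 2 ≤ i → i < j → ∀ t,
      S j t ≤ (∏ m ∈ Finset.Icc i (j-1), (1 - p m)) * S i (t - (j - i)) := by
    intro j
    induction j using Nat.strong_induction_on with
    | _ j IHj =>
      intro h3 hjk i hi2 hij t
      rcases Nat.eq_or_lt_of_le (show i + 1 ≤ j by omega) with h | h
      · subst h
        simp only [Nat.add_sub_cancel]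
        rw [Finset.Icc_self, Finset.prod_singleton]
        have e : i + 1 - i = 1 := by omega
        rw [e]
        have hcr := Scross (i+1) h3 hjk t
        simpa using hcr
      · have hcr := Scross j h3 hjk t
        have hIH := IHj (j-1) (by omega) (by omega) (by omega) i hi2 (by omega) (t-1)
        have hidx : (t-1) - ((j-1) - i) = t - (j - i) := by omega
        rw [hidx] at hIH
        have h1p : 0 < 1 - p (j-1) := pone (j-1) (by omega) (by omega)
        have hsplit : (∏ m ∈ Finset.Icc i (j-1), (1 - p m))
            = (∏ m ∈ Finset.Icc i (j-1-1), (1 - p m)) * (1 - p (j-1)) := by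
          obtain ⟨b, hb⟩ : ∃ b, j - 1 = b + 1 := ⟨j-2, by omega⟩
          rw [hb]
          simp only [Nat.add_sub_cancel]
          rw [Finset.prod_Icc_succ_top (show i ≤ b + 1 by omega)]
        rw [hsplit]
        calc S j t ≤ (1 - p (j-1)) * S (j-1) (t-1) := hcr
          _ ≤ (1 - p (j-1)) * ((∏ m ∈ Finset.Icc i (j-1-1), (1 - p m)) * S i (t - (j-i))) :=
              mul_le_mul_of_nonneg_left hIH h1p.le
          _ = (∏ m ∈ Finset.Icc i (j-1-1), (1 - p m)) * (1 - p (j-1)) * S i (t - (j-i)) := by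
              ring
  have ρsplit : ∀ i j, 2 ≤ i → i < j → j ≤ k →
      ρ j = ρ i * ∏ m ∈ Finset.Icc i (j-1), (1 - p m) := by
    intro i j hi2 hij hjk
    rw [hρ j (by omega) hjk, hρ i hi2 (by omega), mul_assoc]
    congr 1
    have e1 : Finset.Icc 2 (j-1) = Finset.Ioc 1 (j-1) := by
      ext a; simp only [Finset.mem_Icc, Finset.mem_Ioc]; omega
    have e2 : Finset.Icc 2 (i-1) = Finset.Ioc 1 (i-1) := by
      ext a; simp only [Finset.mem_Icc, Finset.mem_Ioc]; omega
    have e3 : Finset.Icc i (j-1) = Finset.Ioc (i-1) (j-1) := by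
      ext a; simp only [Finset.mem_Icc, Finset.mem_Ioc]; omega
    rw [e1, e2, e3]
    exact (Finset.prod_Ioc_consecutive _ (by omega) (by omega)).symm
  intro y hy0 hy1
  have hfy := hf y hy0 hy1
  have part2 : ∀ j, 2 ≤ j → j ≤ k → 1 ≤ f y j ∧ f y j ≤ n j := by
    intro j h1 h2
    obtain ⟨hlt, hmax⟩ := hfy j h1 h2
    have hρj := ρpos j h1 h2
    have hyρ : 0 < y * ρ j := mul_pos hy0 hρj
    have h1f : 1 ≤ f y j := by
      apply hmax 1
      have e : Finset.Icc 1 (1-1) = (∅ : Finset ℕ) := by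
        apply Finset.Icc_eq_empty; omega
      rw [e, Finset.sum_empty]
      exact hyρ
    refine ⟨h1f, ?_⟩
    by_contra hcon
    push_neg at hcon
    have hm : S j (n j) ≤ S j (f y j - 1) := Smono j h1 h2 _ _ (by omega)
    have hTot := Stot j h1 h2
    have hlt' : S j (f y j - 1) < y * ρ j := hlt
    nlinarith
  have key : ∀ i j, 2 ≤ i → i < j → j ≤ k → f y i ≠ f y j := by
    intro i j hi2 hij hjk heq
    obtain ⟨hlti, hmaxi⟩ := hfy i hi2 (by omega)
    obtain ⟨hltj, hmaxj⟩ := hfy j (by omega) hjk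
    have ht1 : 1 ≤ f y j := (part2 j (by omega) hjk).1
    have hlti' : S i (f y j - 1) < y * ρ i := by
      rw [heq] at hlti; exact hlti
    have hgej : y * ρ j ≤ S j (f y j) := by
      by_contra hcon
      push_neg at hcon
      have harg : (∑ τ ∈ Finset.Icc 1 (f y j + 1 - 1), q j τ) < y * ρ j := by
        simp only [Nat.add_sub_cancel]
        exact hcon
      have := hmaxj (f y j + 1) harg
      omega
    have hchain := chainS j (by omega) hjk i hi2 hij (f y j)
    have hmS : S i (f y j - (j - i)) ≤ S i (f y j - 1) :=
      Smono i hi2 (by omega) _ _ (by omega)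
    have hP : 0 < ∏ m ∈ Finset.Icc i (j-1), (1 - p m) := by
      apply Finset.prod_pos
      intro m hm
      simp only [Finset.mem_Icc] at hm
      exact pone m (by omega) (by omega)
    have hρeq := ρsplit i j hi2 hij hjk
    have hfin : (∏ m ∈ Finset.Icc i (j-1), (1 - p m)) * (y * ρ i) = y * ρ j := by
      rw [hρeq]; ring
    have h5 := mul_le_mul_of_nonneg_left hmS hP.le
    have h6 := mul_lt_mul_of_pos_left hlti' hP
    linarith
  refine ⟨?_, part2⟩
  intro i j hi2 hik hj2 hjk hij
  rcases lt_or_gt_of_ne hij with h | h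
  · exact key i j hi2 h hjk
  · exact (key j i hj2 h hik).symm
end

section
/- The exploration rates are strictly increasing before the last two exploring agents: for every action j with 2 ≤ j ≤ k−1 and every agent t with j ≤ t < n_j − 1, it holds that q_t^j < q_{t+1}^j. -/
set_option maxHeartbeats 4000000 in
theorem stmt_11
    (k : ℕ) (hk : 3 ≤ k)
    (p1m p10 : ℝ) (hp1m : 0 < p1m) (hp10 : 0 < p10) (hp1sum : p1m + p10 ≤ 1)
    (p : ℕ → ℝ)
    (hp2 : p 2 < 1/2) (hpk : 0 < p k)
    (hpdec : ∀ j : ℕ, 2 ≤ j → j < k → p (j+1) < p j)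
    (A B q : ℕ → ℕ → ℝ)
    (hA2 : ∀ t : ℕ, A 2 t =
      (2 * p1m * p 2 + p 2 * ∑ m ∈ Finset.Icc 2 (t-1), q 2 m) / (1 - 2 * p 2))
    (hB2 : ∀ t : ℕ, B 2 t = p10 - ∑ m ∈ Finset.Icc 2 (t-1), q 2 m)
    (hAj : ∀ j t : ℕ, 3 ≤ j → j ≤ k →
      A j t = (2 * p j * (p1m * ∏ i ∈ Finset.Icc 2 (j-1), (1 - p i))
        + p j * ∑ τ ∈ Finset.Icc j (t-1), q j τ) / (1 - 2 * p j))
    (hBj : ∀ j t : ℕ, 3 ≤ j → j ≤ k →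
      B j t = (1 - p (j-1)) * ∑ τ ∈ Finset.Icc (j-1) (t-1), q (j-1) τ
        - ∑ τ ∈ Finset.Icc j (t-1), q j τ)
    (hq21 : q 2 1 = 0)
    (hq2 : ∀ t : ℕ, 2 ≤ t → q 2 t = min (A 2 t) (B 2 t))
    (hqlt : ∀ j t : ℕ, 3 ≤ j → j ≤ k → t < j → q j t = 0)
    (hqge : ∀ j t : ℕ, 3 ≤ j → j ≤ k → j ≤ t → q j t = min (A j t) (B j t))
    (n : ℕ → ℕ) (hn1 : n 1 = 1)
    (hnpos : ∀ j : ℕ, 2 ≤ j → j ≤ k → 0 < q j (n j))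
    (hnmax : ∀ j : ℕ, 2 ≤ j → j ≤ k → ∀ t : ℕ, 0 < q j t → t ≤ n j)
    (ρ : ℕ → ℝ)
    (hρ : ∀ j : ℕ, 2 ≤ j → j ≤ k → ρ j = p10 * ∏ i ∈ Finset.Icc 2 (j-1), (1 - p i))
    (f : ℝ → ℕ → ℕ)
    (hf : ∀ y : ℝ, 0 < y → y ≤ 1 → ∀ j : ℕ, 2 ≤ j → j ≤ k →
      (∑ τ ∈ Finset.Icc 1 (f y j - 1), q j τ < y * ρ j) ∧
      (∀ t : ℕ, (∑ τ ∈ Finset.Icc 1 (t-1), q j τ < y * ρ j) → t ≤ f y j)) :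
    ∀ j t : ℕ, 2 ≤ j → j + 1 ≤ k → j ≤ t → t + 1 < n j → q j t < q j (t+1) := by
  -- splitting lemmas for sums and products over Icc
  have hsplit : ∀ (g : ℕ → ℝ) (a s : ℕ), 1 ≤ a → a ≤ s →
      ∑ τ ∈ Finset.Icc a s, g τ = (∑ τ ∈ Finset.Icc a (s-1), g τ) + g s := by
    intro g a s ha has
    rcases Nat.exists_eq_add_of_le has with ⟨m, rfl⟩
    cases m with
    | zero =>
        rw [Finset.Icc_eq_empty (by omega : ¬ a ≤ a + 0 - 1)]
        simp
    | succ m' =>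
        rw [show a + (m'+1) - 1 = a + m' by omega,
          show a + (m'+1) = (a + m') + 1 by omega]
        exact Finset.sum_Icc_succ_top (by omega) g
  have prodsplit : ∀ s : ℕ, 2 ≤ s →
      ∏ i ∈ Finset.Icc 2 s, (1 - p i)
        = (∏ i ∈ Finset.Icc 2 (s-1), (1 - p i)) * (1 - p s) := by
    intro s hs
    rcases Nat.exists_eq_add_of_le hs with ⟨m, rfl⟩
    cases m with
    | zero =>
        rw [Finset.Icc_eq_empty (by omega : ¬ (2:ℕ) ≤ 2 + 0 - 1)]
        simp
    | succ m' =>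
        rw [show 2 + (m'+1) - 1 = 2 + m' by omega,
          show 2 + (m'+1) = (2 + m') + 1 by omega]
        exact Finset.prod_Icc_succ_top (by omega) _
  -- positivity of p j
  have ppos : ∀ j, 2 ≤ j → j ≤ k → 0 < p j := by
    have key : ∀ d j, 2 ≤ j → j + d = k → 0 < p j := by
      intro d
      induction d with
      | zero =>
          intro j hj hjk
          have : j = k := by omega
          subst this; exact hpk
      | succ d ih =>
          intro j hj hjk
          exact lt_trans (ih (j+1) (by omega) (by omega)) (hpdec j hj (by omega))
    intro j hj hjk
    exact key (k - j) j hj (by omega)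
  -- p j < 1/2
  have phalf : ∀ j, 2 ≤ j → j ≤ k → p j < 1/2 := by
    intro j hj
    induction j, hj using Nat.le_induction with
    | base => intro _; exact hp2
    | succ j hj ih =>
        intro hjk
        exact lt_trans (hpdec j hj (by omega)) (ih (by omega))
  have hD : ∀ j, 2 ≤ j → j ≤ k → 0 < 1 - 2 * p j := by
    intro j hj hjk; have := phalf j hj hjk; linarith
  -- positivity of the products
  have Ppos : ∀ j, 2 ≤ j → j ≤ k → 0 < p1m * ∏ i ∈ Finset.Icc 2 (j-1), (1 - p i) := by
    intro j hj hjk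
    apply mul_pos hp1m
    apply Finset.prod_pos
    intro i hi
    rw [Finset.mem_Icc] at hi
    have := phalf i hi.1 (by omega)
    linarith
  -- uniform formula for A
  have hAgen : ∀ j, 2 ≤ j → j ≤ k → ∀ t, A j t =
      (2 * p j * (p1m * ∏ i ∈ Finset.Icc 2 (j-1), (1 - p i))
        + p j * ∑ τ ∈ Finset.Icc j (t-1), q j τ) / (1 - 2 * p j) := by
    intro j hj hjk t
    rcases eq_or_lt_of_le hj with h2 | h3
    · subst h2
      rw [hA2 t, Finset.Icc_eq_empty (by omega : ¬ (2:ℕ) ≤ 2 - 1)]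
      simp
      ring_nf
    · exact hAj j t (by omega) hjk
  -- uniform formula for q
  have hqgen : ∀ j, 2 ≤ j → j ≤ k → ∀ t, j ≤ t → q j t = min (A j t) (B j t) := by
    intro j hj hjk t hjt
    rcases eq_or_lt_of_le hj with h2 | h3
    · subst h2; exact hq2 t hjt
    · exact hqge j t (by omega) hjk hjt
  -- nonnegativity: B ≥ 0, prefix sums ≥ 0, q ≥ 0
  have nonneg : ∀ j, 2 ≤ j → j ≤ k → ∀ t, j ≤ t →
      0 ≤ B j t ∧ 0 ≤ (∑ τ ∈ Finset.Icc j (t-1), q j τ) ∧ 0 ≤ q j t := by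
    intro j hj
    induction j, hj using Nat.le_induction with
    | base =>
        intro hk2 t ht
        induction t, ht using Nat.le_induction with
        | base =>
            have hs : (∑ τ ∈ Finset.Icc 2 (2-1), q 2 τ) = 0 := by
              rw [Finset.Icc_eq_empty (by omega)]; exact Finset.sum_empty
            have hB : 0 ≤ B 2 2 := by rw [hB2 2, hs]; linarith
            have hA : 0 ≤ A 2 2 := by
              rw [hA2 2, hs]
              have h1 := hD 2 (by omega) hk2
              have h2 := ppos 2 (by omega) hk2
              apply div_nonneg _ h1.le
              nlinarith
            exact ⟨hB, by rw [hs], by rw [hq2 2 le_rfl]; exact le_min hA hB⟩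
        | succ t ht ih =>
            have hqB : q 2 t ≤ B 2 t := by
              rw [hq2 t ht]; exact min_le_right _ _
            have hS : 0 ≤ ∑ τ ∈ Finset.Icc 2 ((t+1)-1), q 2 τ := by
              simp only [Nat.add_sub_cancel]
              rw [hsplit (q 2) 2 t (by omega) ht]
              linarith [ih.2.1, ih.2.2]
            have hB : 0 ≤ B 2 (t+1) := by
              have e1 := hB2 (t+1)
              have e0 := hB2 t
              simp only [Nat.add_sub_cancel] at e1
              rw [hsplit (q 2) 2 t (by omega) ht] at e1
              linarith [ih.1]
            have hA : 0 ≤ A 2 (t+1) := by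
              rw [hA2 (t+1)]
              have h1 := hD 2 (by omega) hk2
              have h2 := ppos 2 (by omega) hk2
              apply div_nonneg _ h1.le
              simp only [Nat.add_sub_cancel] at hS ⊢
              nlinarith [hS]
            exact ⟨hB, hS, by rw [hq2 (t+1) (by omega)]; exact le_min hA hB⟩
    | succ j hj ihj =>
        intro hk1 t ht
        have hjk : j ≤ k := by omega
        have hb1 : 0 < 1 - p j := by have := phalf j hj hjk; linarith
        induction t, ht using Nat.le_induction with
        | base =>
            have hs2 : (∑ τ ∈ Finset.Icc (j+1) ((j+1)-1), q (j+1) τ) = 0 := by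
              rw [Finset.Icc_eq_empty (by omega)]; exact Finset.sum_empty
            have e0 := hBj (j+1) (j+1) (by omega) hk1
            simp only [Nat.add_sub_cancel] at e0 hs2
            rw [Finset.Icc_self, Finset.sum_singleton] at e0
            rw [Finset.Icc_eq_empty (by omega : ¬ j+1 ≤ j), Finset.sum_empty] at e0
            have hqj := (ihj hjk j le_rfl).2.2
            have hB : 0 ≤ B (j+1) (j+1) := by
              rw [e0]; nlinarith [mul_nonneg hb1.le hqj]
            have hA : 0 ≤ A (j+1) (j+1) := by
              rw [hAgen (j+1) (by omega) hk1 (j+1)]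
              simp only [Nat.add_sub_cancel]
              rw [hs2]
              apply div_nonneg _ (hD (j+1) (by omega) hk1).le
              have h2 := ppos (j+1) (by omega) hk1
              have h3 := Ppos (j+1) (by omega) hk1
              simp only [Nat.add_sub_cancel] at h3
              nlinarith
            refine ⟨hB, ?_, ?_⟩
            · simp only [Nat.add_sub_cancel]; rw [hs2]
            · rw [hqgen (j+1) (by omega) hk1 (j+1) le_rfl]; exact le_min hA hB
        | succ t ht ih =>
            have hq1B : q (j+1) t ≤ B (j+1) t := by
              rw [hqgen (j+1) (by omega) hk1 t (by omega)]; exact min_le_right _ _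
            have hqj : 0 ≤ q j t := (ihj hjk t (by omega)).2.2
            have e1 := hBj (j+1) (t+1) (by omega) hk1
            have e0 := hBj (j+1) t (by omega) hk1
            simp only [Nat.add_sub_cancel] at e1 e0
            rw [hsplit (q j) j t (by omega) (by omega),
              hsplit (q (j+1)) (j+1) t (by omega) ht] at e1
            have hB : 0 ≤ B (j+1) (t+1) := by
              nlinarith [ih.1, mul_nonneg hb1.le hqj, e1, e0, hq1B]
            have hS : 0 ≤ ∑ τ ∈ Finset.Icc (j+1) ((t+1)-1), q (j+1) τ := by
              simp only [Nat.add_sub_cancel]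
              rw [hsplit (q (j+1)) (j+1) t (by omega) ht]
              linarith [ih.2.1, ih.2.2]
            have hA : 0 ≤ A (j+1) (t+1) := by
              rw [hAgen (j+1) (by omega) hk1 (t+1)]
              apply div_nonneg _ (hD (j+1) (by omega) hk1).le
              have h2 := ppos (j+1) (by omega) hk1
              have h3 := Ppos (j+1) (by omega) hk1
              simp only [Nat.add_sub_cancel] at hS h3 ⊢
              nlinarith [hS]
            exact ⟨hB, hS, by
              rw [hqgen (j+1) (by omega) hk1 (t+1) (by omega)]; exact le_min hA hB⟩
  -- A is always positive
  have posA : ∀ j, 2 ≤ j → j ≤ k → ∀ t, j ≤ t → 0 < A j t := by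
    intro j hj hjk t hjt
    rw [hAgen j hj hjk t]
    have h1 := hD j hj hjk
    have h2 := ppos j hj hjk
    have h3 := Ppos j hj hjk
    have h4 := (nonneg j hj hjk t hjt).2.1
    apply div_pos _ h1
    nlinarith
  -- q vanishes after n j
  have qzero : ∀ j, 2 ≤ j → j ≤ k → ∀ s, j ≤ s → n j < s → q j s = 0 := by
    intro j hj hjk s hjs hns
    have h0 := (nonneg j hj hjk s hjs).2.2
    by_contra h
    have hpos : 0 < q j s := lt_of_le_of_ne h0 (Ne.symm h)
    exact absurd (hnmax j hj hjk s hpos) (by omega)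
  -- the basic recurrence of A
  have recA : ∀ j, 2 ≤ j → j ≤ k → ∀ s, j ≤ s →
      A j (s+1) * (1 - 2 * p j) = A j s * (1 - 2 * p j) + p j * q j s := by
    intro j hj hjk s hjs
    rw [hAgen j hj hjk (s+1), hAgen j hj hjk s]
    simp only [Nat.add_sub_cancel]
    rw [hsplit (q j) j s (by omega) hjs]
    have h1 := hD j hj hjk
    field_simp
    ring
  -- lower bound on B at level j+1
  have Bge : ∀ j, 2 ≤ j → j + 1 ≤ k → ∀ s, j ≤ s →
      (1 - p j) * q j s ≤ B (j+1) (s+1) := by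
    intro j hj hjk1 s hjs
    induction s, hjs using Nat.le_induction with
    | base =>
        have e0 := hBj (j+1) (j+1) (by omega) hjk1
        simp only [Nat.add_sub_cancel] at e0
        rw [Finset.Icc_self, Finset.sum_singleton] at e0
        rw [Finset.Icc_eq_empty (by omega : ¬ j+1 ≤ j), Finset.sum_empty] at e0
        rw [e0]; ring_nf; rfl
    | succ s hs ih =>
        have e1 := hBj (j+1) (s+1+1) (by omega) hjk1
        have e0 := hBj (j+1) (s+1) (by omega) hjk1
        simp only [Nat.add_sub_cancel] at e1 e0
        rw [hsplit (q j) j (s+1) (by omega) (by omega),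
          hsplit (q (j+1)) (j+1) (s+1) (by omega) (by omega)] at e1
        simp only [Nat.add_sub_cancel] at e1
        have hqB : q (j+1) (s+1) ≤ B (j+1) (s+1) := by
          rw [hqgen (j+1) (by omega) hjk1 (s+1) (by omega)]
          exact min_le_right _ _
        linarith [e1, e0, hqB]
  -- main lemma: before time n j, the minimum is attained at A
  have ML : ∀ j, 2 ≤ j → j ≤ k → ∀ t, j ≤ t → t < n j → A j t ≤ B j t := by
    intro j hj
    induction j, hj using Nat.le_induction with
    | base =>
        intro hjk t h2t htn
        by_contra hAB
        push_neg at hAB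
        have hqt : q 2 t = B 2 t := by
          rw [hq2 t h2t]; exact min_eq_right hAB.le
        have hB1 : B 2 (t+1) = 0 := by
          have e1 := hB2 (t+1)
          have e0 := hB2 t
          simp only [Nat.add_sub_cancel] at e1
          rw [hsplit (q 2) 2 t (by omega) h2t] at e1
          rw [hqt] at e1
          linarith [e1, e0]
        have hz : ∀ s, t+1 ≤ s → B 2 s = 0 ∧ q 2 s = 0 := by
          intro s hs
          induction s, hs using Nat.le_induction with
          | base =>
              refine ⟨hB1, ?_⟩
              rw [hq2 (t+1) (by omega), hB1]
              exact min_eq_right (posA 2 (by omega) hjk (t+1) (by omega)).le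
          | succ s hs ih =>
              have e1 := hB2 (s+1)
              have e0 := hB2 s
              simp only [Nat.add_sub_cancel] at e1
              rw [hsplit (q 2) 2 s (by omega) (by omega)] at e1
              rw [ih.2] at e1
              have hBs1 : B 2 (s+1) = 0 := by linarith [e1, e0, ih.1]
              refine ⟨hBs1, ?_⟩
              rw [hq2 (s+1) (by omega), hBs1]
              exact min_eq_right (posA 2 (by omega) hjk (s+1) (by omega)).le
        have h1 := (hz (n 2) (by omega)).2
        have h2 := hnpos 2 le_rfl hjk
        linarith
    | succ j hj ihj =>
        intro hjk1 t hjt htn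
        have hjk : j ≤ k := by omega
        have hDa := hD (j+1) (by omega) hjk1
        have hDb := hD j hj hjk
        have hab : p (j+1) < p j := hpdec j hj (by omega)
        have hb1 : 0 < 1 - p j := by have := phalf j hj hjk; linarith
        have ha1 : 0 < 1 - p (j+1) := by
          have := phalf (j+1) (by omega) hjk1; linarith
        by_cases hcase : t ≤ n j
        · -- exploration of level j still running: A-regime via growth comparison
          have qA : ∀ s, j ≤ s → s < n j → q j s = A j s := by
            intro s h1 h2
            rw [hqgen j hj hjk s h1]
            exact min_eq_left (ihj hjk s h1 h2)
          have C : ∀ s, j ≤ s → s + 1 ≤ n j →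
              A (j+1) (s+1) ≤ (1 - p j) * A j s := by
            intro s hs
            induction s, hs using Nat.le_induction with
            | base =>
                intro _
                have hX := Ppos j hj hjk
                have eA1 : A (j+1) (j+1) =
                    (2 * p (j+1) * ((p1m * ∏ i ∈ Finset.Icc 2 (j-1), (1 - p i)) * (1 - p j)))
                      / (1 - 2 * p (j+1)) := by
                  rw [hAgen (j+1) (by omega) hjk1 (j+1)]
                  simp only [Nat.add_sub_cancel]
                  rw [prodsplit j hj,
                    Finset.Icc_eq_empty (by omega : ¬ j+1 ≤ j), Finset.sum_empty]
                  ring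
                have eA0 : A j j =
                    (2 * p j * (p1m * ∏ i ∈ Finset.Icc 2 (j-1), (1 - p i))) / (1 - 2 * p j) := by
                  rw [hAgen j hj hjk j,
                    Finset.Icc_eq_empty (by omega : ¬ j ≤ j-1), Finset.sum_empty]
                  ring
                rw [eA1, eA0,
                  show (1 - p j) * ((2 * p j * (p1m * ∏ i ∈ Finset.Icc 2 (j-1), (1 - p i))) / (1 - 2 * p j))
                    = ((1 - p j) * (2 * p j * (p1m * ∏ i ∈ Finset.Icc 2 (j-1), (1 - p i)))) / (1 - 2 * p j)
                    from (mul_div_assoc _ _ _).symm,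
                  div_le_div_iff₀ hDa hDb]
                nlinarith [mul_nonneg (mul_nonneg hX.le hb1.le) (sub_nonneg.mpr hab.le)]
            | succ s hs ihC =>
                intro hn
                have h1 : A (j+1) (s+1) ≤ (1 - p j) * A j s := ihC (by omega)
                have qjs : q j s = A j s := qA s hs (by omega)
                have hq1 : q (j+1) (s+1) = A (j+1) (s+1) := by
                  rw [hqgen (j+1) (by omega) hjk1 (s+1) (by omega)]
                  apply min_eq_left
                  calc A (j+1) (s+1) ≤ (1 - p j) * A j s := h1
                    _ = (1 - p j) * q j s := by rw [qjs]
                    _ ≤ B (j+1) (s+1) := Bge j hj hjk1 s hs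
                have e1 := recA (j+1) (by omega) hjk1 (s+1) (by omega)
                have e2 := recA j hj hjk s hs
                rw [hq1] at e1
                rw [qjs] at e2
                have hAjs : 0 < A j s := posA j hj hjk s hs
                have hA1nn : 0 ≤ A (j+1) (s+1) :=
                  (posA (j+1) (by omega) hjk1 (s+1) (by omega)).le
                -- t1 : multiply e1 by (1-2 p j)
                have t1 : A (j+1) (s+1+1) * ((1 - 2*p (j+1)) * (1 - 2*p j))
                    = (A (j+1) (s+1) * (1 - p (j+1))) * (1 - 2*p j) := by
                  linear_combination (1 - 2*p j) * e1
                have t2 : ((1 - p j) * A j (s+1)) * ((1 - 2*p (j+1)) * (1 - 2*p j))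
                    = ((1 - p j) * (A j s * (1 - p j))) * (1 - 2*p (j+1)) := by
                  linear_combination ((1 - p j) * (1 - 2*p (j+1))) * e2
                have s1 : A (j+1) (s+1) * ((1 - p (j+1)) * (1 - 2*p j))
                    ≤ ((1 - p j) * A j s) * ((1 - p (j+1)) * (1 - 2*p j)) :=
                  mul_le_mul_of_nonneg_right h1 (mul_nonneg ha1.le hDb.le)
                have s2 : (1 - p (j+1)) * (1 - 2*p j) ≤ (1 - p j) * (1 - 2*p (j+1)) := by
                  nlinarith [hab]
                have s3 : A j s * ((1 - p (j+1)) * (1 - 2*p j))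
                    ≤ A j s * ((1 - p j) * (1 - 2*p (j+1))) :=
                  mul_le_mul_of_nonneg_left s2 hAjs.le
                have s35 : (1 - p j) * (A j s * ((1 - p (j+1)) * (1 - 2*p j)))
                    ≤ (1 - p j) * (A j s * ((1 - p j) * (1 - 2*p (j+1)))) :=
                  mul_le_mul_of_nonneg_left s3 hb1.le
                have hDD : 0 < (1 - 2*p (j+1)) * (1 - 2*p j) := mul_pos hDa hDb
                have chain : A (j+1) (s+1+1) * ((1 - 2*p (j+1)) * (1 - 2*p j))
                    ≤ ((1 - p j) * A j (s+1)) * ((1 - 2*p (j+1)) * (1 - 2*p j)) := by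
                  linarith [t1, t2, s1, s35]
                exact (mul_le_mul_iff_of_pos_right hDD).mp chain
          obtain ⟨s, rfl⟩ : ∃ s, t = s + 1 := ⟨t - 1, by omega⟩
          have hs : j ≤ s := by omega
          have qjs : q j s = A j s := qA s hs (by omega)
          calc A (j+1) (s+1) ≤ (1 - p j) * A j s := C s hs (by omega)
            _ = (1 - p j) * q j s := by rw [qjs]
            _ ≤ B (j+1) (s+1) := Bge j hj hjk1 s hs
        · -- level j exploration over: binding B would kill all future q
          push_neg at hcase
          by_contra hAB
          push_neg at hAB
          have hqt : q (j+1) t = B (j+1) t := by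
            rw [hqgen (j+1) (by omega) hjk1 t hjt]
            exact min_eq_right hAB.le
          have hcross0 : ∀ s, t ≤ s → q j s = 0 := by
            intro s hs
            exact qzero j hj hjk s (by omega) (by omega)
          have hB1 : B (j+1) (t+1) = 0 := by
            have e1 := hBj (j+1) (t+1) (by omega) hjk1
            have e0 := hBj (j+1) t (by omega) hjk1
            simp only [Nat.add_sub_cancel] at e1 e0
            rw [hsplit (q j) j t (by omega) (by omega),
              hsplit (q (j+1)) (j+1) t (by omega) hjt] at e1
            rw [hcross0 t le_rfl, hqt] at e1
            linarith [e1, e0]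
          have hz : ∀ s, t+1 ≤ s → B (j+1) s = 0 ∧ q (j+1) s = 0 := by
            intro s hs
            induction s, hs using Nat.le_induction with
            | base =>
                refine ⟨hB1, ?_⟩
                rw [hqgen (j+1) (by omega) hjk1 (t+1) (by omega), hB1]
                exact min_eq_right (posA (j+1) (by omega) hjk1 (t+1) (by omega)).le
            | succ s hs ih =>
                have e1 := hBj (j+1) (s+1) (by omega) hjk1
                have e0 := hBj (j+1) s (by omega) hjk1
                simp only [Nat.add_sub_cancel] at e1 e0
                rw [hsplit (q j) j s (by omega) (by omega),
                  hsplit (q (j+1)) (j+1) s (by omega) (by omega)] at e1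
                rw [hcross0 s (by omega), ih.2] at e1
                have hBs1 : B (j+1) (s+1) = 0 := by linarith [e1, e0, ih.1]
                refine ⟨hBs1, ?_⟩
                rw [hqgen (j+1) (by omega) hjk1 (s+1) (by omega), hBs1]
                exact min_eq_right (posA (j+1) (by omega) hjk1 (s+1) (by omega)).le
          have h1 := (hz (n (j+1)) (by omega)).2
          have h2 := hnpos (j+1) (by omega) hjk1
          linarith
  -- conclusion
  intro j t hj hjk1 hjt htn
  have hjk : j ≤ k := by omega
  have h1 : A j t ≤ B j t := ML j hj hjk t hjt (by omega)
  have h2 : A j (t+1) ≤ B j (t+1) := ML j hj hjk (t+1) (by omega) htn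
  have hq1 : q j t = A j t := by
    rw [hqgen j hj hjk t hjt]; exact min_eq_left h1
  have hq2' : q j (t+1) = A j (t+1) := by
    rw [hqgen j hj hjk (t+1) (by omega)]; exact min_eq_left h2
  have hApos := posA j hj hjk t hjt
  have e := recA j hj hjk t hjt
  have hp := ppos j hj hjk
  have hd := hD j hj hjk
  rw [hq1, hq2']
  rw [hq1] at e
  nlinarith [mul_pos hp hApos, e, hd]
end

section
/- For every action j with 2 ≤ j ≤ k and every agent t ≥ 1, it holds that q_t^j ≥ 0 and Σ_{τ=1}^{t−1} q_τ^j ≤ ρ_j. -/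
theorem stmt_13
    (k : ℕ) (hk : 3 ≤ k)
    (p1m p10 : ℝ) (hp1m : 0 < p1m) (hp10 : 0 < p10) (hp1sum : p1m + p10 ≤ 1)
    (p : ℕ → ℝ)
    (hp2 : p 2 < 1/2) (hpk : 0 < p k)
    (hpdec : ∀ j : ℕ, 2 ≤ j → j < k → p (j+1) < p j)
    (A B q : ℕ → ℕ → ℝ)
    (hA2 : ∀ t : ℕ, A 2 t =
      (2 * p1m * p 2 + p 2 * ∑ m ∈ Finset.Icc 2 (t-1), q 2 m) / (1 - 2 * p 2))
    (hB2 : ∀ t : ℕ, B 2 t = p10 - ∑ m ∈ Finset.Icc 2 (t-1), q 2 m)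
    (hAj : ∀ j t : ℕ, 3 ≤ j → j ≤ k →
      A j t = (2 * p j * (p1m * ∏ i ∈ Finset.Icc 2 (j-1), (1 - p i))
        + p j * ∑ τ ∈ Finset.Icc j (t-1), q j τ) / (1 - 2 * p j))
    (hBj : ∀ j t : ℕ, 3 ≤ j → j ≤ k →
      B j t = (1 - p (j-1)) * ∑ τ ∈ Finset.Icc (j-1) (t-1), q (j-1) τ
        - ∑ τ ∈ Finset.Icc j (t-1), q j τ)
    (hq21 : q 2 1 = 0)
    (hq2 : ∀ t : ℕ, 2 ≤ t → q 2 t = min (A 2 t) (B 2 t))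
    (hqlt : ∀ j t : ℕ, 3 ≤ j → j ≤ k → t < j → q j t = 0)
    (hqge : ∀ j t : ℕ, 3 ≤ j → j ≤ k → j ≤ t → q j t = min (A j t) (B j t))
    (n : ℕ → ℕ) (hn1 : n 1 = 1)
    (hnpos : ∀ j : ℕ, 2 ≤ j → j ≤ k → 0 < q j (n j))
    (hnmax : ∀ j : ℕ, 2 ≤ j → j ≤ k → ∀ t : ℕ, 0 < q j t → t ≤ n j)
    (ρ : ℕ → ℝ)
    (hρ : ∀ j : ℕ, 2 ≤ j → j ≤ k → ρ j = p10 * ∏ i ∈ Finset.Icc 2 (j-1), (1 - p i))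
    (f : ℝ → ℕ → ℕ)
    (hf : ∀ y : ℝ, 0 < y → y ≤ 1 → ∀ j : ℕ, 2 ≤ j → j ≤ k →
      (∑ τ ∈ Finset.Icc 1 (f y j - 1), q j τ < y * ρ j) ∧
      (∀ t : ℕ, (∑ τ ∈ Finset.Icc 1 (t-1), q j τ < y * ρ j) → t ≤ f y j)) :
    ∀ j t : ℕ, 2 ≤ j → j ≤ k → 1 ≤ t →
      0 ≤ q j t ∧ ∑ τ ∈ Finset.Icc 1 (t-1), q j τ ≤ ρ j := by
  -- positivity facts about p
  have hppos : ∀ j, 2 ≤ j → j ≤ k → 0 < p j := by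
    have aux : ∀ m j, 2 ≤ j → j ≤ k → k - j ≤ m → 0 < p j := by
      intro m
      induction m with
      | zero =>
        intro j hj hjk hm
        have : j = k := by omega
        rw [this]; exact hpk
      | succ m ih =>
        intro j hj hjk hm
        rcases eq_or_lt_of_le hjk with h | h
        · rw [h]; exact hpk
        · exact lt_trans (ih (j+1) (by omega) (by omega) (by omega)) (hpdec j hj h)
    intro j hj hjk; exact aux (k - j) j hj hjk le_rfl
  have hplt : ∀ j, 2 ≤ j → j ≤ k → p j < 1/2 := by
    intro j hj
    induction j, hj using Nat.le_induction with
    | base => intro _; exact hp2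
    | succ j hj ih => intro h; exact lt_trans (hpdec j hj (by omega)) (ih (by omega))
  have hprod : ∀ m, m < k → 0 < ∏ i ∈ Finset.Icc 2 m, (1 - p i) := by
    intro m hm
    apply Finset.prod_pos
    intro i hi
    simp only [Finset.mem_Icc] at hi
    have := hplt i hi.1 (by omega)
    linarith
  -- main lemma
  have main : ∀ j, 2 ≤ j → j ≤ k →
      (∀ t, 1 ≤ t → 0 ≤ q j t) ∧ (∀ m, ∑ τ ∈ Finset.Icc 1 m, q j τ ≤ ρ j) := by
    intro j hj
    induction j, hj using Nat.le_induction with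
    | base =>
      intro hjk
      have hp2pos : 0 < p 2 := hppos 2 le_rfl hjk
      have hden : 0 < 1 - 2 * p 2 := by linarith
      have inv : ∀ m, (0 ≤ ∑ τ ∈ Finset.Icc 2 m, q 2 τ ∧
          ∑ τ ∈ Finset.Icc 2 m, q 2 τ ≤ p10) ∧ (1 ≤ m → 0 ≤ q 2 m) := by
        intro m
        induction m with
        | zero =>
          refine ⟨⟨?_, ?_⟩, by omega⟩
          · rw [Finset.Icc_eq_empty (by omega)]; simp
          · rw [Finset.Icc_eq_empty (by omega)]; simp; linarith
        | succ m ih =>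
          by_cases hm : 2 ≤ m + 1
          · have hsum : ∑ τ ∈ Finset.Icc 2 (m+1), q 2 τ
                = (∑ τ ∈ Finset.Icc 2 m, q 2 τ) + q 2 (m+1) :=
              Finset.sum_Icc_succ_top hm _
            have hqA : 0 ≤ A 2 (m+1) := by
              rw [hA2]
              apply div_nonneg _ (le_of_lt hden)
              simp only [Nat.add_sub_cancel]
              nlinarith [ih.1.1, hp2pos, hp1m]
            have hBv : B 2 (m+1) = p10 - ∑ τ ∈ Finset.Icc 2 m, q 2 τ := by
              rw [hB2]; simp only [Nat.add_sub_cancel]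
            have hqB : 0 ≤ B 2 (m+1) := by rw [hBv]; linarith [ih.1.2]
            have hq : q 2 (m+1) = min (A 2 (m+1)) (B 2 (m+1)) := hq2 _ hm
            have hqn : 0 ≤ q 2 (m+1) := by rw [hq]; exact le_min hqA hqB
            refine ⟨⟨?_, ?_⟩, fun _ => hqn⟩
            · rw [hsum]; linarith [ih.1.1]
            · rw [hsum]
              have hle : q 2 (m+1) ≤ B 2 (m+1) := by rw [hq]; exact min_le_right _ _
              rw [hBv] at hle
              linarith
          · have hm0 : m = 0 := by omega
            subst hm0
            refine ⟨⟨?_, ?_⟩, ?_⟩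
            · simp [Finset.Icc_self, hq21]
            · simp [Finset.Icc_self, hq21]; linarith
            · intro _; simp [hq21]
      have sum12 : ∀ m, ∑ τ ∈ Finset.Icc 1 m, q 2 τ = ∑ τ ∈ Finset.Icc 2 m, q 2 τ := by
        intro m
        rw [eq_comm]
        apply Finset.sum_subset
        · intro x hx; simp only [Finset.mem_Icc] at *; omega
        · intro x hx hnx
          simp only [Finset.mem_Icc] at hx hnx
          have : x = 1 := by omega
          rw [this, hq21]
      have hρ2 : ρ 2 = p10 := by
        rw [hρ 2 le_rfl hjk]
        rw [Finset.Icc_eq_empty (by omega)]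
        simp
      refine ⟨fun t ht => (inv t).2 ht, fun m => ?_⟩
      rw [sum12, hρ2]
      exact (inv m).1.2
    | succ j hj ih =>
      intro hJk
      have IH := ih (by omega)
      have hJ3 : 3 ≤ j + 1 := by omega
      have hpJpos : 0 < p (j+1) := hppos (j+1) (by omega) hJk
      have hden : 0 < 1 - 2 * p (j+1) := by linarith [hplt (j+1) (by omega) hJk]
      have hpj1 : 0 < 1 - p j := by linarith [hplt j hj (by omega)]
      have hprodJ : 0 < ∏ i ∈ Finset.Icc 2 j, (1 - p i) := hprod j (by omega)
      have inv : ∀ m, (0 ≤ ∑ τ ∈ Finset.Icc (j+1) m, q (j+1) τ ∧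
          ∑ τ ∈ Finset.Icc (j+1) m, q (j+1) τ
            ≤ (1 - p j) * ∑ τ ∈ Finset.Icc j m, q j τ) ∧ (1 ≤ m → 0 ≤ q (j+1) m) := by
        intro m
        induction m with
        | zero =>
          refine ⟨⟨?_, ?_⟩, by omega⟩
          · rw [Finset.Icc_eq_empty (by omega)]; simp
          · rw [Finset.Icc_eq_empty (by omega), Finset.Icc_eq_empty (by omega)]; simp
        | succ m ih2 =>
          have hTmono : ∑ τ ∈ Finset.Icc j m, q j τ ≤ ∑ τ ∈ Finset.Icc j (m+1), q j τ := by
            by_cases hjm : j ≤ m + 1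
            · rw [Finset.sum_Icc_succ_top hjm]
              have := IH.1 (m+1) (by omega)
              linarith
            · rw [Finset.Icc_eq_empty (by omega), Finset.Icc_eq_empty (by omega)]
          by_cases hm : j + 1 ≤ m + 1
          · have hsum : ∑ τ ∈ Finset.Icc (j+1) (m+1), q (j+1) τ
                = (∑ τ ∈ Finset.Icc (j+1) m, q (j+1) τ) + q (j+1) (m+1) :=
              Finset.sum_Icc_succ_top hm _
            have hAv := hAj (j+1) (m+1) hJ3 hJk
            simp only [Nat.add_sub_cancel] at hAv
            have hqA : 0 ≤ A (j+1) (m+1) := by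
              rw [hAv]
              apply div_nonneg _ (le_of_lt hden)
              have t1 : (0:ℝ) ≤ 2 * p (j+1) * (p1m * ∏ i ∈ Finset.Icc 2 j, (1 - p i)) :=
                mul_nonneg (by linarith) (mul_nonneg hp1m.le hprodJ.le)
              have t2 : (0:ℝ) ≤ p (j+1) * ∑ τ ∈ Finset.Icc (j+1) m, q (j+1) τ :=
                mul_nonneg hpJpos.le ih2.1.1
              linarith
            have hBv := hBj (j+1) (m+1) hJ3 hJk
            simp only [Nat.add_sub_cancel] at hBv
            have hqB : 0 ≤ B (j+1) (m+1) := by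
              rw [hBv]; linarith [ih2.1.2]
            have hq : q (j+1) (m+1) = min (A (j+1) (m+1)) (B (j+1) (m+1)) :=
              hqge (j+1) (m+1) hJ3 hJk hm
            have hqn : 0 ≤ q (j+1) (m+1) := by rw [hq]; exact le_min hqA hqB
            refine ⟨⟨?_, ?_⟩, fun _ => hqn⟩
            · rw [hsum]; linarith [ih2.1.1]
            · rw [hsum]
              have hle : q (j+1) (m+1) ≤ B (j+1) (m+1) := by
                rw [hq]; exact min_le_right _ _
              rw [hBv] at hle
              nlinarith [hpj1]
          · have hempty : Finset.Icc (j+1) (m+1) = ∅ := Finset.Icc_eq_empty (by omega)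
            have hTnn : 0 ≤ ∑ τ ∈ Finset.Icc j (m+1), q j τ := by
              apply Finset.sum_nonneg
              intro τ hτ
              simp only [Finset.mem_Icc] at hτ
              exact IH.1 τ (by omega)
            refine ⟨⟨?_, ?_⟩, ?_⟩
            · rw [hempty]; simp
            · rw [hempty]; simp
              exact mul_nonneg (le_of_lt hpj1) hTnn
            · intro _
              rw [hqlt (j+1) (m+1) hJ3 hJk (by omega)]
      have sumJ : ∀ m, ∑ τ ∈ Finset.Icc 1 m, q (j+1) τ
          = ∑ τ ∈ Finset.Icc (j+1) m, q (j+1) τ := by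
        intro m
        rw [eq_comm]
        apply Finset.sum_subset
        · intro x hx; simp only [Finset.mem_Icc] at *; omega
        · intro x hx hnx
          simp only [Finset.mem_Icc] at hx hnx
          exact hqlt (j+1) x hJ3 hJk (by omega)
      have hρrec : ρ (j+1) = ρ j * (1 - p j) := by
        rw [hρ (j+1) (by omega) hJk, hρ j hj (by omega)]
        have h1 : (j+1) - 1 = (j-1) + 1 := by omega
        have h2 : j - 1 + 1 = j := by omega
        rw [h1, Finset.prod_Icc_succ_top (by omega), h2]
        ring
      refine ⟨fun t ht => (inv t).2 ht, fun m => ?_⟩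
      rw [sumJ, hρrec]
      have h1 : ∑ τ ∈ Finset.Icc (j+1) m, q (j+1) τ
          ≤ (1 - p j) * ∑ τ ∈ Finset.Icc j m, q j τ := (inv m).1.2
      have h2 : ∑ τ ∈ Finset.Icc j m, q j τ ≤ ∑ τ ∈ Finset.Icc 1 m, q j τ := by
        apply Finset.sum_le_sum_of_subset_of_nonneg
        · intro x hx; simp only [Finset.mem_Icc] at *; omega
        · intro x hx hnx
          simp only [Finset.mem_Icc] at hx
          exact IH.1 x (by omega)
      have h3 : ∑ τ ∈ Finset.Icc 1 m, q j τ ≤ ρ j := IH.2 m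
      nlinarith [hpj1]
  intro j t hj hjk ht
  exact ⟨(main j hj hjk).1 t ht, (main j hj hjk).2 (t-1)⟩
end

section
/- The first exploration interval of each action extends strictly beyond its prior mean: for every action j with 2 ≤ j ≤ k, it holds that i_{j+1}^j > μ_j. -/
open MeasureTheory

lemma aux_pos_int (D1 : Measure ℝ) [IsProbabilityMeasure D1]
    (hsupp : ∀ a b : ℝ, -1 ≤ a → a < b → b ≤ 1 → 0 < D1 (Set.Ioo a b))
    (hone : D1 (Set.Icc (-1) 1) = 1)
    (f : ℝ → ℝ) (hf : Continuous f) (C : ℝ)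
    (hC : ∀ x ∈ Set.Icc (-1 : ℝ) 1, ‖f x‖ ≤ C)
    (S : Set ℝ) (hS : MeasurableSet S)
    (hnn : ∀ x ∈ S, 0 ≤ f x)
    (a b : ℝ) (ha : -1 ≤ a) (hab : a < b) (hb : b ≤ 1)
    (hsub : Set.Ioo a b ⊆ S) (ε : ℝ) (hε : 0 < ε)
    (hfε : ∀ x ∈ Set.Ioo a b, ε ≤ f x) :
    0 < ∫ x in S, f x ∂D1 := by
  have hcompl : D1 (Set.Icc (-1 : ℝ) 1)ᶜ = 0 := by
    have := measure_compl (μ := D1) (s := Set.Icc (-1 : ℝ) 1) measurableSet_Icc (measure_ne_top D1 _)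
    rw [hone] at this
    simpa using this
  have hbound : ∀ᵐ x ∂D1, ‖f x‖ ≤ C := by
    filter_upwards [measure_eq_zero_iff_ae_notMem.mp hcompl] with x hx
    exact hC x (by simpa using hx)
  have hint : Integrable f D1 :=
    Integrable.mono' (integrable_const C) hf.aestronglyMeasurable hbound
  have hμpos : 0 < (D1 (Set.Ioo a b)).toReal :=
    ENNReal.toReal_pos (hsupp a b ha hab hb).ne' (measure_ne_top D1 _)
  have h2 : ε * (D1 (Set.Ioo a b)).toReal ≤ ∫ x in Set.Ioo a b, f x ∂D1 :=
    setIntegral_ge_of_const_le_real measurableSet_Ioo (measure_ne_top D1 _) hfε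
      (hint.integrableOn)
  have h3 : ∫ x in Set.Ioo a b, f x ∂D1 ≤ ∫ x in S, f x ∂D1 := by
    refine setIntegral_mono_set hint.integrableOn ?_ (HasSubset.Subset.eventuallyLE hsub)
    exact (ae_restrict_iff' hS).mpr (Filter.Eventually.of_forall hnn)
  have : 0 < ε * (D1 (Set.Ioo a b)).toReal := mul_pos hε hμpos
  linarith

theorem stmt_18
    (D1 : Measure ℝ) [IsProbabilityMeasure D1] [NullSingletonClass D1]
    (hsupp : ∀ a b : ℝ, -1 ≤ a → a < b → b ≤ 1 → 0 < D1 (Set.Ioo a b))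
    (hone : D1 (Set.Icc (-1) 1) = 1)
    (k : ℕ) (hk : 2 ≤ k)
    (p : ℕ → ℝ) (hp2 : p 2 < 1/2) (hpk : 0 < p k)
    (hpdec : ∀ j : ℕ, 2 ≤ j → j < k → p (j+1) < p j)
    (μ : ℕ → ℝ) (hμ : ∀ j : ℕ, μ j = 2 * p j - 1)
    (i : ℕ → ℕ → ℝ)
    (hinit : ∀ j t : ℕ, 2 ≤ j → j ≤ k → t ≤ j → i j t = -1)
    (hfirst : ∀ j : ℕ, 2 ≤ j → j ≤ k →
      μ j ≤ i j (j+1) ∧ i j (j+1) ≤ 1 ∧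
      (∫ x in {x : ℝ | μ j ≤ x ∧ x ≤ i j (j+1)}, (x - μ j) ∂D1)
        = min ((∏ m ∈ Finset.Icc 2 (j-1), (1 - p m)) *
              ∫ x in {x : ℝ | x ≤ μ j}, (μ j - x) ∂D1)
            (∫ x in {x : ℝ | μ j ≤ x ∧ x ≤ 1}, (x - μ j) ∂D1))
    (hnext : ∀ j t : ℕ, 2 ≤ j → j ≤ k → j < t →
      i j t ≤ i j (t+1) ∧ i j (t+1) ≤ 1 ∧
      (∫ x in {x : ℝ | i j t < x ∧ x ≤ i j (t+1)}, (x - μ j) ∂D1)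
        = min (p j * ∫ x in {x : ℝ | -1 ≤ x ∧ x ≤ i j t}, (1 - x) ∂D1)
            (∫ x in {x : ℝ | i j t < x ∧ x ≤ 1}, (x - μ j) ∂D1)) :
    ∀ j : ℕ, 2 ≤ j → j ≤ k → μ j < i j (j+1) := by
  have hanti : ∀ a b : ℕ, 2 ≤ a → a ≤ b → b ≤ k → p b ≤ p a := by
    intro a b ha hab
    induction b, hab using Nat.le_induction with
    | base => intro _; exact le_refl _
    | succ n hn ih =>
      intro hbk
      have hnk : n < k := Nat.lt_of_succ_le hbk
      have h1 := hpdec n (le_trans ha hn) hnk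
      have h2 := ih hnk.le
      linarith
  intro j hj2 hjk
  obtain ⟨hle, hle1, heq⟩ := hfirst j hj2 hjk
  have hpj_pos : 0 < p j := lt_of_lt_of_le hpk (hanti j k hj2 hjk le_rfl)
  have hpj_lt : p j < 1/2 := lt_of_le_of_lt (hanti 2 j le_rfl hj2 hjk) hp2
  have hμj : μ j = 2 * p j - 1 := hμ j
  have hμ_neg1 : -1 < μ j := by rw [hμj]; linarith
  have hμ_lt0 : μ j < 0 := by rw [hμj]; linarith
  -- product positive
  have hprod : 0 < ∏ m ∈ Finset.Icc 2 (j-1), (1 - p m) := by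
    apply Finset.prod_pos
    intro m hm
    simp only [Finset.mem_Icc] at hm
    have hmk : m ≤ k := le_trans hm.2 (le_trans (Nat.sub_le j 1) hjk)
    have : p m < 1/2 := lt_of_le_of_lt (hanti 2 m le_rfl hm.1 hmk) hp2
    linarith
  -- A-integral positive
  have hA : 0 < ∫ x in {x : ℝ | x ≤ μ j}, (μ j - x) ∂D1 := by
    have hSm : MeasurableSet {x : ℝ | x ≤ μ j} := measurableSet_Iic
    refine aux_pos_int D1 hsupp hone (fun x => μ j - x) (continuous_const.sub continuous_id)
      (|μ j| + 1) ?_ _ hSm (fun x hx => by simp only [Set.mem_setOf_eq] at hx; show (0:ℝ) ≤ μ j - x; linarith)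
      (-1) ((-1 + μ j)/2) le_rfl (by linarith) (by linarith)
      ?_ ((μ j + 1)/2) (by linarith) ?_
    · intro x hx
      have h1 : |x| ≤ 1 := abs_le.mpr ⟨hx.1, hx.2⟩
      calc ‖μ j - x‖ ≤ |μ j| + |x| := abs_sub _ _
        _ ≤ |μ j| + 1 := by linarith
    · intro x hx
      simp only [Set.mem_Ioo] at hx
      simp only [Set.mem_setOf_eq]
      linarith
    · intro x hx
      simp only [Set.mem_Ioo] at hx
      linarith
  -- B-integral positive
  have hB : 0 < ∫ x in {x : ℝ | μ j ≤ x ∧ x ≤ 1}, (x - μ j) ∂D1 := by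
    have hSm : MeasurableSet {x : ℝ | μ j ≤ x ∧ x ≤ 1} := by
      have : {x : ℝ | μ j ≤ x ∧ x ≤ 1} = Set.Icc (μ j) 1 := rfl
      rw [this]; exact measurableSet_Icc
    refine aux_pos_int D1 hsupp hone (fun x => x - μ j) (continuous_id.sub continuous_const)
      (|μ j| + 1) ?_ _ hSm (fun x hx => by simp only [Set.mem_setOf_eq] at hx; show (0:ℝ) ≤ x - μ j; linarith [hx.1])
      ((μ j + 1)/2) 1 (by linarith) (by linarith) le_rfl
      ?_ ((1 - μ j)/2) (by linarith) ?_
    · intro x hx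
      have h1 : |x| ≤ 1 := abs_le.mpr ⟨hx.1, hx.2⟩
      calc ‖x - μ j‖ ≤ |x| + |μ j| := abs_sub _ _
        _ ≤ |μ j| + 1 := by linarith
    · intro x hx
      simp only [Set.mem_Ioo] at hx
      exact ⟨by linarith, hx.2.le⟩
    · intro x hx
      simp only [Set.mem_Ioo] at hx
      linarith
  by_contra hcon
  push_neg at hcon
  have hieq : i j (j+1) = μ j := le_antisymm hcon hle
  rw [hieq] at heq
  have hset : {x : ℝ | μ j ≤ x ∧ x ≤ μ j} = {μ j} := by
    ext x; simp only [Set.mem_setOf_eq, Set.mem_singleton_iff]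
    constructor
    · rintro ⟨h1, h2⟩; linarith
    · rintro rfl; exact ⟨le_rfl, le_rfl⟩
  rw [hset] at heq
  have hnull : D1 {μ j} = 0 := measure_singleton _
  have hzero : (∫ x in ({μ j} : Set ℝ), (x - μ j) ∂D1) = 0 := by
    rw [Measure.restrict_eq_zero.mpr hnull, integral_zero_measure]
  rw [hzero] at heq
  have : 0 < min ((∏ m ∈ Finset.Icc 2 (j-1), (1 - p m)) *
      ∫ x in {x : ℝ | x ≤ μ j}, (μ j - x) ∂D1)
      (∫ x in {x : ℝ | μ j ≤ x ∧ x ≤ 1}, (x - μ j) ∂D1) :=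
    lt_min (mul_pos hprod hA) hB
  linarith
end
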